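/- arXiv:1305.1260 — 6 statements merged into one kernel-verified Lean document; each statement's English description precedes it below -/
import Mathlib

section
/- The unitary subgroup 𝒰_*(FD_{2p}) of the group algebra FD_{2p} is the internal semidirect product of the normal subgroup V_*(FA) with the elementary abelian 2-group generated by b and −1: V_*(FA) is normal in 𝒰_*(FD_{2p}), every unitary unit of FD_{2p} is uniquely a product of an element of V_*(FA) with an element of ⟨b⟩ × ⟨−1⟩, and V_*(FA) ∩ (⟨b⟩ × ⟨−1⟩) = {1}. -/
noncomputable section

open MonoidAlgebra

abbrev Dg (p : ℕ) := DihedralGroup p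

def aa (p : ℕ) : Dg p := DihedralGroup.r 1
def bb (p : ℕ) : Dg p := DihedralGroup.sr 0

abbrev FG (p : ℕ) (F : Type) [Field F] := MonoidAlgebra F (Dg p)

/-- The cyclic subgroup `A = ⟨a⟩` of the dihedral group. -/
def Asub (p : ℕ) : Subgroup (Dg p) := Subgroup.zpowers (aa p)

/-- `Γ(A)` : the ideal of `FD_{2p}` generated by `{h - 1 : h ∈ A}`. -/
def gammaA (p : ℕ) (F : Type) [Field F] : Ideal (FG p F) :=
  Ideal.span ((fun h => (MonoidAlgebra.of F (Dg p) h : FG p F) - 1) '' (Asub p : Set (Dg p)))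

/-- The set `1 + Γ(A)`. -/
def oneGamma (p : ℕ) (F : Type) [Field F] : Set (FG p F) :=
  {x | x - 1 ∈ gammaA p F}

/-- The canonical involution `Σ x_g g ↦ Σ x_g g⁻¹`. -/
def invo (p : ℕ) (F : Type) [Field F] (x : FG p F) : FG p F :=
  MonoidAlgebra.ofCoeff (Finsupp.equivMapDomain (Equiv.inv (Dg p)) x.coeff)

/-- An element is a unitary unit if `x* = x⁻¹`. -/
def IsUnitary (p : ℕ) (F : Type) [Field F] (x : FG p F) : Prop :=
  x * invo p F x = 1 ∧ invo p F x * x = 1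

/-- The set of unitary units of `FD_{2p}`. -/
def unitarySet (p : ℕ) (F : Type) [Field F] : Set (FG p F) := {x | IsUnitary p F x}

/-- The augmentation map. -/
def aug (p : ℕ) (F : Type) [Field F] (x : FG p F) : F := x.coeff.sum fun _ c => c

/-- Membership in the group algebra `FA` of the subgroup `A`, viewed inside `FD_{2p}`. -/
def memFA (p : ℕ) (F : Type) [Field F] (x : FG p F) : Prop := ∀ g ∈ x.coeff.support, g ∈ Asub p

/-- `V_*(FA)`: unitary units of augmentation 1 supported on `A`. -/
def VstarFA (p : ℕ) (F : Type) [Field F] : Set (FG p F) :=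
  {x | memFA p F x ∧ aug p F x = 1 ∧ IsUnitary p F x}

/-- `S_*(FA)`: symmetric units of augmentation 1 supported on `A`. -/
def SstarFA (p : ℕ) (F : Type) [Field F] : Set (FG p F) :=
  {x | memFA p F x ∧ aug p F x = 1 ∧ IsUnit x ∧ invo p F x = x}

/-! Write a unitary unit as `u = x + y b` with `x, y ∈ FA`. Since `b x = x* b` for `x ∈ FA`, the
identity `u u* = 1` splits into `x x* + y y* = 1` and `xy + yx = 2xy = 0`. As `FA` is commutative
of characteristic `p` and `A` has exponent `p`, `x ^ p = ε(x) ^ p` for the augmentation `ε`, so an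
element of `FA` of nonzero augmentation is a unit; since `ε(x)² + ε(y)² = 1`, one of `x`, `y` is a
unit and the other vanishes. So `u = x` or `u = y b` with `x` (resp. `y`) a unitary element of
`FA`, whose augmentation is `±1`. Conjugation by `b` acts on `FA` as `*`, which gives normality,
and `V_*(FA) ∩ FA b = ∅` gives uniqueness. -/

namespace MonoidAlgebra

variable {k M G : Type*}

theorem pow_char_eq_algebraMap_lift [CommRing k] [CommMonoid M] (p : ℕ) [Fact p.Prime] [CharP k p]
    (hM : ∀ m : M, m ^ p = 1) (x : k[M]) :
    x ^ p = algebraMap k k[M] (lift k k M 1 x ^ p) := by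
  have : CharP k[M] p := charP_of_injective_algebraMap' k p
  induction x using induction_linear with
  | zero => simp [zero_pow (Fact.out : p.Prime).ne_zero]
  | add x y hx hy => rw [add_pow_char, hx, hy, map_add, add_pow_char, map_add]
  | single m r => simp [single_pow, hM, lift_single, coe_algebraMap]

theorem mem_range_mapDomainAlgHom_subtype_iff [CommSemiring k] [Group G] {H : Subgroup G}
    {x : k[G]} :
    x ∈ (mapDomainAlgHom k k H.subtype).range ↔ ↑x.coeff.support ⊆ (H : Set G) := by
  classical
  constructor
  · rintro ⟨y, rfl⟩
    rw [AlgHom.toRingHom_eq_coe, RingHom.coe_coe, mapDomainAlgHom_apply, coeff_mapDomain]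
    intro g hg
    obtain ⟨h, -, rfl⟩ := Finset.mem_image.mp (Finsupp.mapDomain_support hg)
    exact h.2
  · intro hx
    refine ⟨comapDomain _ Subtype.val_injective x, mapDomain_comapDomain ?_ _⟩
    rwa [Subgroup.coe_subtype, Subtype.range_coe]

theorem lift_one_mapDomain [CommSemiring k] [Monoid M] [Monoid G] (f : M →* G) (x : k[M]) :
    lift k k G 1 (mapDomain f x) = lift k k M 1 x := by
  rw [← mapDomainAlgHom_apply k k, ← AlgHom.comp_apply]
  congr 1
  ext m
  simp

end MonoidAlgebra

lemma two_ne_zero_of_odd {K : Type*} [NonAssocSemiring K] [Nontrivial K] {p : ℕ} [CharP K p]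
    (hodd : Odd p) : (2 : K) ≠ 0 := by
  refine Ring.two_ne_zero ?_
  rw [ringChar.eq K p]
  rintro rfl
  exact (by decide : ¬Odd 2) hodd

open DihedralGroup

section Dihedral

variable {p : ℕ}

lemma aa_zpow (k : ℤ) : aa p ^ k = r k := r_one_zpow k

lemma r_mem_Asub (i : ZMod p) : r i ∈ Asub p :=
  ⟨i.cast, by simp only [aa_zpow, ZMod.intCast_zmod_cast]⟩

lemma sr_notMem_Asub (i : ZMod p) : sr i ∉ Asub p := by
  rintro ⟨k, hk⟩
  simp only [aa_zpow] at hk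
  cases hk

lemma pow_eq_one_of_mem_Asub {g : Dg p} (hg : g ∈ Asub p) : g ^ p = 1 := by
  obtain ⟨k, rfl⟩ := hg
  rw [← zpow_natCast, ← zpow_mul, mul_comm, zpow_mul, zpow_natCast, aa, r_one_pow_n, one_zpow]

lemma mul_bb_mem_Asub_iff (g : Dg p) : g * bb p ∈ Asub p ↔ g ∉ Asub p := by
  cases g with
  | r i => simpa [bb, r_mem_Asub] using sr_notMem_Asub (-i)
  | sr i => simpa [bb, sr_notMem_Asub] using r_mem_Asub (-i)

lemma bb_mul_bb (p : ℕ) : bb p * bb p = 1 := sr_mul_self 0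

lemma bb_mul_mul_bb {g : Dg p} (hg : g ∈ Asub p) : bb p * g * bb p = g⁻¹ := by
  obtain ⟨k, rfl⟩ := hg
  simp [aa_zpow, bb, inv_r]

end Dihedral

section GroupAlgebra

variable {p : ℕ} {F : Type} [Field F]

local notation "β" => (of F (Dg p) (bb p) : FG p F)

lemma invo_single (g : Dg p) (c : F) : invo p F (single g c) = single g⁻¹ c := by
  ext : 1
  simp [invo, Finsupp.equivMapDomain_single]

lemma coeff_invo (x : FG p F) (g : Dg p) : (invo p F x).coeff g = x.coeff g⁻¹ := rfl

lemma invo_add (x y : FG p F) : invo p F (x + y) = invo p F x + invo p F y := by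
  ext g
  simp [coeff_invo]

lemma invo_zero : invo p F 0 = 0 := by
  simpa using invo_add (0 : FG p F) 0

lemma invo_neg (x : FG p F) : invo p F (-x) = -invo p F x :=
  eq_neg_of_add_eq_zero_left (by rw [← invo_add, neg_add_cancel, invo_zero])

lemma invo_one : invo p F 1 = 1 := by
  rw [MonoidAlgebra.one_def, invo_single, inv_one]

lemma invo_invo (x : FG p F) : invo p F (invo p F x) = x := by
  ext g
  simp [coeff_invo]

lemma invo_mul (x y : FG p F) : invo p F (x * y) = invo p F y * invo p F x := by
  induction x using induction_linear with
  | zero => simp [invo_zero]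
  | add x x' hx hx' => rw [add_mul, invo_add, invo_add, hx, hx', mul_add]
  | single g c =>
    induction y using induction_linear with
    | zero => simp [invo_zero]
    | add y y' hy hy' => rw [mul_add, invo_add, invo_add, hy, hy', add_mul]
    | single h d => simp [invo_single, single_mul_single, mul_comm c d]

lemma aug_eq_lift (x : FG p F) : aug p F x = lift F F (Dg p) 1 x := by
  rw [lift_apply, aug]
  simp

lemma aug_invo (x : FG p F) : aug p F (invo p F x) = aug p F x :=
  Finsupp.sum_equivMapDomain (Equiv.inv (Dg p)) x.coeff fun _ c => c

lemma aug_one : aug p F 1 = 1 := by simp [aug_eq_lift]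

lemma aug_neg (x : FG p F) : aug p F (-x) = -aug p F x := by simp [aug_eq_lift]

lemma aug_mul (x y : FG p F) : aug p F (x * y) = aug p F x * aug p F y := by
  simp [aug_eq_lift]

lemma aug_add (x y : FG p F) : aug p F (x + y) = aug p F x + aug p F y := by
  simp [aug_eq_lift]

variable (p F) in
def FA : Subalgebra F (FG p F) := (mapDomainAlgHom F F (Asub p).subtype).range

lemma memFA_iff_mem_FA {x : FG p F} : memFA p F x ↔ x ∈ FA p F :=
  mem_range_mapDomainAlgHom_subtype_iff.symm

lemma coeff_eq_zero_of_mem_FA {x : FG p F} (hx : x ∈ FA p F) {g : Dg p} (hg : g ∉ Asub p) :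
    x.coeff g = 0 :=
  Finsupp.notMem_support_iff.mp fun h => hg (memFA_iff_mem_FA.mpr hx g h)

lemma single_mem_FA {g : Dg p} (hg : g ∈ Asub p) (c : F) : single g c ∈ FA p F :=
  ⟨single ⟨g, hg⟩ c, by simp⟩

lemma FA_induction {motive : FG p F → Prop} (zero : motive 0)
    (add : ∀ x y, motive x → motive y → motive (x + y))
    (single : ∀ g ∈ Asub p, ∀ c : F, motive (single g c)) {x : FG p F} (hx : x ∈ FA p F) :
    motive x := by
  rw [FA, AlgHom.mem_range] at hx
  obtain ⟨x, rfl⟩ := hx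
  induction x using induction_linear with
  | zero => rwa [map_zero]
  | add x y hx hy => rw [map_add]; exact add _ _ hx hy
  | single g c => simpa using single g g.2 c

lemma invo_mem_FA {x : FG p F} (hx : x ∈ FA p F) : invo p F x ∈ FA p F := by
  refine FA_induction (motive := fun x => invo p F x ∈ FA p F) ?_
    (fun x y hx hy => ?_) (fun g hg c => ?_) hx
  · rw [invo_zero]; exact zero_mem _
  · rw [invo_add]; exact add_mem hx hy
  · rw [invo_single]; exact single_mem_FA (inv_mem hg) c

instance : IsMulCommutative (Asub p) := Subgroup.zpowers_isMulCommutative _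

open scoped IsMulCommutative in
lemma commute_of_mem_FA {x y : FG p F} (hx : x ∈ FA p F) (hy : y ∈ FA p F) : Commute x y := by
  obtain ⟨x, rfl⟩ := (AlgHom.mem_range _).mp hx
  obtain ⟨y, rfl⟩ := (AlgHom.mem_range _).mp hy
  exact (Commute.all x y).map _

open scoped IsMulCommutative in
lemma pow_char_of_mem_FA [Fact p.Prime] [CharP F p] {x : FG p F} (hx : x ∈ FA p F) :
    x ^ p = algebraMap F (FG p F) (aug p F x ^ p) := by
  obtain ⟨x, rfl⟩ := (AlgHom.mem_range _).mp hx
  rw [← map_pow, pow_char_eq_algebraMap_lift p (fun a => Subtype.ext (pow_eq_one_of_mem_Asub a.2)),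
    AlgHom.commutes, aug_eq_lift, mapDomainAlgHom_apply, lift_one_mapDomain]

lemma isUnit_of_mem_FA [Fact p.Prime] [CharP F p] {x : FG p F} (hx : x ∈ FA p F)
    (haug : aug p F x ≠ 0) : IsUnit x := by
  rw [← isUnit_pow_iff (Fact.out : p.Prime).ne_zero, pow_char_of_mem_FA hx]
  exact (pow_ne_zero p haug).isUnit.map _

lemma beta_mul_beta : β * β = 1 := by
  rw [← map_mul, bb_mul_bb, map_one]

lemma invo_beta : invo p F β = β := by
  rw [of_apply, invo_single, inv_eq_of_mul_eq_one_right (bb_mul_bb p)]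

lemma beta_mul_of_mem_FA {x : FG p F} (hx : x ∈ FA p F) : β * x = invo p F x * β := by
  refine FA_induction (motive := fun x => β * x = invo p F x * β) ?_
    (fun x y hx hy => ?_) (fun g hg c => ?_) hx
  · rw [mul_zero, invo_zero, zero_mul]
  · rw [mul_add, hx, hy, invo_add, add_mul]
  · rw [invo_single, of_apply, single_mul_single, single_mul_single, one_mul, mul_one,
      ← bb_mul_mul_bb hg, mul_assoc, mul_assoc, bb_mul_bb, mul_one]

lemma exists_eq_add_mul_beta (u : FG p F) : ∃ x ∈ FA p F, ∃ y ∈ FA p F, u = x + y * β := by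
  induction u using induction_linear with
  | zero => exact ⟨0, zero_mem _, 0, zero_mem _, by simp⟩
  | add u v hu hv =>
    obtain ⟨x, hx, y, hy, rfl⟩ := hu
    obtain ⟨x', hx', y', hy', rfl⟩ := hv
    exact ⟨x + x', add_mem hx hx', y + y', add_mem hy hy', by rw [add_mul]; abel⟩
  | single g c =>
    by_cases hg : g ∈ Asub p
    · exact ⟨single g c, single_mem_FA hg c, 0, zero_mem _, by simp⟩
    · refine ⟨0, zero_mem _, single (g * bb p) c, single_mem_FA ((mul_bb_mem_Asub_iff g).mpr hg) c, ?_⟩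
      rw [zero_add, of_apply, single_mul_single, mul_assoc, bb_mul_bb, mul_one, mul_one]

lemma eq_zero_of_add_mul_beta_eq_zero {x y : FG p F} (hx : x ∈ FA p F) (hy : y ∈ FA p F)
    (h : x + y * β = 0) : x = 0 ∧ y = 0 := by
  have hx0 : x = 0 := by
    ext g
    by_cases hg : g ∈ Asub p
    · have hyb : y.coeff (g * (bb p)⁻¹) = 0 := by
        rw [inv_eq_of_mul_eq_one_right (bb_mul_bb p)]
        exact coeff_eq_zero_of_mem_FA hy ((mul_bb_mem_Asub_iff g).not_left.mpr hg)
      simpa [hyb] using congrArg (fun z => z.coeff g) h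
    · exact coeff_eq_zero_of_mem_FA hx hg
  refine ⟨hx0, ?_⟩
  rw [hx0, zero_add] at h
  rw [← mul_one y, ← beta_mul_beta, ← mul_assoc, h, zero_mul]

lemma add_mul_beta_injective {x y x' y' : FG p F} (hx : x ∈ FA p F) (hy : y ∈ FA p F)
    (hx' : x' ∈ FA p F) (hy' : y' ∈ FA p F) (h : x + y * β = x' + y' * β) : x = x' ∧ y = y' := by
  have := eq_zero_of_add_mul_beta_eq_zero (sub_mem hx hx') (sub_mem hy hy')
    (by rw [sub_mul, sub_add_sub_comm, h, sub_self])
  exact ⟨sub_eq_zero.mp this.1, sub_eq_zero.mp this.2⟩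

lemma add_mul_beta_mul_invo {x y : FG p F} (hx : x ∈ FA p F) (hy : y ∈ FA p F) :
    (x + y * β) * invo p F (x + y * β) =
      (x * invo p F x + y * invo p F y) + (x * y + y * x) * β := by
  have hbx : β * invo p F x = x * β := by
    rw [beta_mul_of_mem_FA (invo_mem_FA hx), invo_invo]
  have hby : β * invo p F y = y * β := by
    rw [beta_mul_of_mem_FA (invo_mem_FA hy), invo_invo]
  rw [invo_add, invo_mul, invo_beta, hby]
  calc (x + y * β) * (invo p F x + y * β)
      = x * invo p F x + x * y * β + y * (β * invo p F x) + y * (β * y) * β := by noncomm_ring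
    _ = x * invo p F x + x * y * β + y * (x * β) + y * invo p F y * (β * β) := by
          rw [hbx, beta_mul_of_mem_FA hy]; noncomm_ring
    _ = _ := by rw [beta_mul_beta]; noncomm_ring

theorem mem_FA_or_eq_mul_beta_of_isUnitary [Fact p.Prime] [CharP F p] (hodd : Odd p)
    {u : FG p F} (hu : IsUnitary p F u) :
    (u ∈ FA p F ∧ u * invo p F u = 1) ∨ ∃ y ∈ FA p F, y * invo p F y = 1 ∧ u = y * β := by
  obtain ⟨x, hx, y, hy, rfl⟩ := exists_eq_add_mul_beta u
  obtain ⟨hnorm, hanti⟩ := add_mul_beta_injective (x' := 1) (y' := 0)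
    (add_mem (mul_mem hx (invo_mem_FA hx)) (mul_mem hy (invo_mem_FA hy)))
    (add_mem (mul_mem hx hy) (mul_mem hy hx)) (one_mem _) (zero_mem _)
    (by rw [← add_mul_beta_mul_invo hx hy, hu.1, zero_mul, add_zero])
  have hxy : x * y = 0 := by
    rw [(commute_of_mem_FA hy hx).eq, ← two_smul F] at hanti
    exact (smul_eq_zero.mp hanti).resolve_left (two_ne_zero_of_odd hodd)
  have haug : aug p F x * aug p F x + aug p F y * aug p F y = 1 := by
    simpa [aug_add, aug_mul, aug_invo, aug_one] using congrArg (aug p F) hnorm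
  by_cases hax : aug p F x = 0
  · have hay : aug p F y ≠ 0 := fun hay => by simp [hax, hay] at haug
    have hx0 : x = 0 := (isUnit_of_mem_FA hy hay).mul_left_eq_zero.mp hxy
    subst hx0
    exact .inr ⟨y, hy, by simpa using hnorm, by rw [zero_add]⟩
  · have hy0 : y = 0 := (isUnit_of_mem_FA hx hax).mul_right_eq_zero.mp hxy
    subst hy0
    exact .inl ⟨by simpa using hx, by simpa [invo_zero] using hnorm⟩

lemma mem_FA_of_mem_VstarFA {v : FG p F} (hv : v ∈ VstarFA p F) : v ∈ FA p F :=
  memFA_iff_mem_FA.mp hv.1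

lemma mem_VstarFA_of_mem_FA {v : FG p F} (hv : v ∈ FA p F) (haug : aug p F v = 1)
    (h : v * invo p F v = 1) : v ∈ VstarFA p F :=
  ⟨memFA_iff_mem_FA.mpr hv, haug, h, (commute_of_mem_FA hv (invo_mem_FA hv)).eq ▸ h⟩

lemma one_mem_VstarFA : (1 : FG p F) ∈ VstarFA p F :=
  mem_VstarFA_of_mem_FA (one_mem _) aug_one (by rw [invo_one, mul_one])

lemma invo_mem_VstarFA {v : FG p F} (hv : v ∈ VstarFA p F) : invo p F v ∈ VstarFA p F :=
  mem_VstarFA_of_mem_FA (invo_mem_FA (mem_FA_of_mem_VstarFA hv)) (by rw [aug_invo, hv.2.1])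
    (by rw [invo_invo, hv.2.2.2])

lemma mem_VstarFA_or_neg_mem_VstarFA {v : FG p F} (hv : v ∈ FA p F) (h : v * invo p F v = 1) :
    v ∈ VstarFA p F ∨ -v ∈ VstarFA p F := by
  have haug : aug p F v * aug p F v = 1 := by
    simpa [aug_mul, aug_invo, aug_one] using congrArg (aug p F) h
  refine (mul_self_eq_one_iff.mp haug).imp (mem_VstarFA_of_mem_FA hv · h) fun hneg => ?_
  exact mem_VstarFA_of_mem_FA (neg_mem hv) (by rw [aug_neg, hneg, neg_neg])
    (by rw [invo_neg, neg_mul_neg, h])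

lemma mul_beta_notMem_VstarFA {y : FG p F} (hy : y ∈ FA p F) : y * β ∉ VstarFA p F := by
  intro hyb
  have hzero := (add_mul_beta_injective (mem_FA_of_mem_VstarFA hyb) (zero_mem _) (zero_mem _) hy
    (by rw [zero_mul, add_zero, zero_add])).1
  have := hyb.2.1
  rw [hzero, aug_eq_lift, map_zero] at this
  exact zero_ne_one this

theorem mul_mul_invo_mem_VstarFA [Fact p.Prime] [CharP F p] (hodd : Odd p) {u v : FG p F}
    (hu : IsUnitary p F u) (hv : v ∈ VstarFA p F) : u * v * invo p F u ∈ VstarFA p F := by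
  have hvA := mem_FA_of_mem_VstarFA hv
  rcases mem_FA_or_eq_mul_beta_of_isUnitary hodd hu with ⟨huA, hu1⟩ | ⟨y, hyA, hy1, rfl⟩
  · rwa [(commute_of_mem_FA huA hvA).eq, mul_assoc, hu1, mul_one]
  · have : y * β * v * invo p F (y * β) = invo p F v := by
      calc y * β * v * invo p F (y * β) = y * (β * v) * β * invo p F y := by
            rw [invo_mul, invo_beta]; noncomm_ring
        _ = y * invo p F v * (β * β) * invo p F y := by
            rw [beta_mul_of_mem_FA hvA]; noncomm_ring
        _ = invo p F v * (y * invo p F y) := by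
            rw [beta_mul_beta, mul_one, (commute_of_mem_FA hyA (invo_mem_FA hvA)).eq, mul_assoc]
        _ = invo p F v := by rw [hy1, mul_one]
    rw [this]
    exact invo_mem_VstarFA hv

variable (p F) in
def kleinFour : Set (FG p F) := {1, -1, β, -β}

lemma isUnitary_of_mem_kleinFour {e : FG p F} (he : e ∈ kleinFour p F) : IsUnitary p F e := by
  rcases he with rfl | rfl | rfl | rfl <;>
    simp [IsUnitary, invo_one, invo_neg, invo_beta, beta_mul_beta, -of_apply]

lemma mul_mem_kleinFour {e e' : FG p F} (he : e ∈ kleinFour p F) (he' : e' ∈ kleinFour p F) :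
    e * e' ∈ kleinFour p F := by
  rcases he with rfl | rfl | rfl | rfl <;> rcases he' with rfl | rfl | rfl | rfl <;>
    simp [kleinFour, beta_mul_beta, -of_apply]

lemma commute_of_mem_kleinFour {e e' : FG p F} (he : e ∈ kleinFour p F)
    (he' : e' ∈ kleinFour p F) : Commute e e' := by
  rcases he with rfl | rfl | rfl | rfl <;> rcases he' with rfl | rfl | rfl | rfl <;> simp

lemma mul_self_of_mem_kleinFour {e : FG p F} (he : e ∈ kleinFour p F) : e * e = 1 := by
  rcases he with rfl | rfl | rfl | rfl <;> simp [beta_mul_beta, -of_apply]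

lemma eq_one_of_mul_mem_VstarFA [CharP F p] (hodd : Odd p) {v e : FG p F}
    (hv : v ∈ VstarFA p F) (he : e ∈ kleinFour p F) (hve : v * e ∈ VstarFA p F) : e = 1 := by
  have hvA := mem_FA_of_mem_VstarFA hv
  rcases he with rfl | rfl | rfl | rfl
  · rfl
  · have := hve.2.1
    rw [mul_neg_one, aug_neg, hv.2.1, neg_eq_iff_add_eq_zero, one_add_one_eq_two] at this
    exact absurd this (two_ne_zero_of_odd hodd)
  · exact absurd hve (mul_beta_notMem_VstarFA hvA)
  · rw [mul_neg, ← neg_mul] at hve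
    exact absurd hve (mul_beta_notMem_VstarFA (neg_mem hvA))

theorem exists_mem_VstarFA_mem_kleinFour_eq_mul [Fact p.Prime] [CharP F p] (hodd : Odd p)
    {u : FG p F} (hu : IsUnitary p F u) :
    ∃ v ∈ VstarFA p F, ∃ e ∈ kleinFour p F, u = v * e := by
  rcases mem_FA_or_eq_mul_beta_of_isUnitary hodd hu with ⟨huA, hu1⟩ | ⟨y, hyA, hy1, rfl⟩
  · rcases mem_VstarFA_or_neg_mem_VstarFA huA hu1 with hV | hV
    · exact ⟨u, hV, 1, by simp [kleinFour], (mul_one u).symm⟩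
    · exact ⟨-u, hV, -1, by simp [kleinFour], by rw [neg_mul_neg, mul_one]⟩
  · rcases mem_VstarFA_or_neg_mem_VstarFA hyA hy1 with hV | hV
    · exact ⟨y, hV, β, by simp [kleinFour], rfl⟩
    · exact ⟨-y, hV, -β, by simp [kleinFour], by rw [neg_mul_neg]⟩

lemma eq_and_eq_of_mul_eq_mul [CharP F p] (hodd : Odd p) {v v' e e' : FG p F}
    (hv : v ∈ VstarFA p F) (hv' : v' ∈ VstarFA p F) (he : e ∈ kleinFour p F)
    (he' : e' ∈ kleinFour p F) (h : v * e = v' * e') : v = v' ∧ e = e' := by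
  have hv'_eq : v * (e * e') = v' := by
    rw [← mul_assoc, h, mul_assoc, mul_self_of_mem_kleinFour he', mul_one]
  have hee' : e * e' = 1 :=
    eq_one_of_mul_mem_VstarFA hodd hv (mul_mem_kleinFour he he') (hv'_eq ▸ hv')
  refine ⟨by rw [← hv'_eq, hee', mul_one], ?_⟩
  rw [← mul_one e, ← mul_self_of_mem_kleinFour he', ← mul_assoc, hee', one_mul]

end GroupAlgebra

theorem stmt0_general (p : ℕ) (hp : p.Prime) (hodd : Odd p)
    (F : Type) [Field F] [CharP F p] :
    ∀ E : Set (FG p F),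
      E = {1, -1, of F (Dg p) (bb p), -(of F (Dg p) (bb p))} →
      -- `E` is an elementary abelian 2-group of unitary units
      (E ⊆ unitarySet p F) ∧
      (∀ x ∈ E, ∀ y ∈ E, x * y ∈ E ∧ x * y = y * x ∧ x * x = 1) ∧
      -- `V_*(FA)` is a normal subgroup of `𝒰_*(FD_{2p})`
      (VstarFA p F ⊆ unitarySet p F) ∧
      (∀ u ∈ unitarySet p F, ∀ v ∈ VstarFA p F, u * v * invo p F u ∈ VstarFA p F) ∧
      -- unique factorization `𝒰_*(FD_{2p}) = V_*(FA) · E`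
      (∀ u ∈ unitarySet p F, ∃! w : FG p F × FG p F,
        w.1 ∈ VstarFA p F ∧ w.2 ∈ E ∧ u = w.1 * w.2) ∧
      -- trivial intersection
      VstarFA p F ∩ E = {1} := by
  have : Fact p.Prime := ⟨hp⟩
  rintro E rfl
  refine ⟨fun e he => isUnitary_of_mem_kleinFour he,
    fun e he e' he' => ⟨mul_mem_kleinFour he he', commute_of_mem_kleinFour he he',
      mul_self_of_mem_kleinFour he⟩,
    fun v hv => hv.2.2, fun u hu v hv => mul_mul_invo_mem_VstarFA hodd hu hv,
    fun u hu => ?_, ?_⟩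
  · obtain ⟨v, hv, e, he, rfl⟩ := exists_mem_VstarFA_mem_kleinFour_eq_mul hodd hu
    refine ⟨(v, e), ⟨hv, he, rfl⟩, fun ⟨v', e'⟩ ⟨hv', he', h⟩ => ?_⟩
    obtain ⟨rfl, rfl⟩ := eq_and_eq_of_mul_eq_mul hodd hv' hv he' he h.symm
    rfl
  · ext e
    refine ⟨fun ⟨hv, he⟩ => eq_one_of_mul_mem_VstarFA hodd one_mem_VstarFA he (by rwa [one_mul]),
      ?_⟩
    rintro rfl
    exact ⟨one_mem_VstarFA, Or.inl rfl⟩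

/-- `𝒰_*(FD_{2p}) = V_*(FA) ⋊ (⟨b⟩ × ⟨-1⟩)` as an internal semidirect
product: `V_*(FA)` is normal in the unitary subgroup, every unitary unit is uniquely a
product of an element of `V_*(FA)` with an element of `E = ⟨b⟩ × ⟨-1⟩ = {1, -1, b, -b}`,
and `V_*(FA) ∩ E = {1}`. -/
theorem stmt0 (p : ℕ) (hp : p.Prime) (hodd : Odd p)
    (F : Type) [Field F] [Fintype F] [CharP F p] :
    ∀ E : Set (FG p F),
      E = {1, -1, of F (Dg p) (bb p), -(of F (Dg p) (bb p))} →
      -- `E` is an elementary abelian 2-group of unitary units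
      (E ⊆ unitarySet p F) ∧
      (∀ x ∈ E, ∀ y ∈ E, x * y ∈ E ∧ x * y = y * x ∧ x * x = 1) ∧
      -- `V_*(FA)` is a normal subgroup of `𝒰_*(FD_{2p})`
      (VstarFA p F ⊆ unitarySet p F) ∧
      (∀ u ∈ unitarySet p F, ∀ v ∈ VstarFA p F, u * v * invo p F u ∈ VstarFA p F) ∧
      -- unique factorization `𝒰_*(FD_{2p}) = V_*(FA) · E`
      (∀ u ∈ unitarySet p F, ∃! w : FG p F × FG p F,
        w.1 ∈ VstarFA p F ∧ w.2 ∈ E ∧ u = w.1 * w.2) ∧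
      -- trivial intersection
      VstarFA p F ∩ E = {1} :=
  stmt0_general p hp hodd F
end
end

section
/- Every unitary unit of FD_{2p} lying in 1 + Γ(A) belongs to V_*(FA); that is, the group of unitary units of the group 1 + Γ(A) is exactly V_*(FA), the group of unitary normalized units of the group algebra FA. -/
noncomputable section

open MonoidAlgebra

/-!
Split `x = u + w` into its rotation part `u` and reflection part `w`. Pushing forward along the
sign character `D_{2p} → ℤˣ ≅ D_{2p}/A` kills `Γ(A)`, so `x ∈ 1 + Γ(A)` forces `aug u = 1` and
`aug w = 0`. Since `w* = w` and `w u = u* w`, the two homogeneous components of `x* x = 1` read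
`u* u + w² = 1` and `2 u* w = 0`, whence `w³ = w`. Now `w²` is supported on the elementary abelian
group `A` and has augmentation `0`, so Frobenius gives `(w²)^p = 0` and `w = w (w²)^p = 0`.
Conversely, an element `x` of `FA` with `aug x = 1` satisfies `x - 1 = Σ x_g (g - 1) ∈ Γ(A)`.
-/

namespace MonoidAlgebra

section Grading

variable {k G ι : Type*}

/-- The multiplicative counterpart of `AddMonoidAlgebra.gradeBy`. -/
def gradeBy (k) [CommSemiring k] (f : G → ι) (i : ι) : Submodule k (MonoidAlgebra k G) where
  carrier := {a | ∀ g ∈ a.coeff.support, f g = i}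
  zero_mem' g hg := by cases hg
  add_mem' {a b} ha hb g hg := by
    classical exact (Finset.mem_union.mp (Finsupp.support_add hg)).elim (ha g) (hb g)
  smul_mem' _ _ ha := Set.Subset.trans Finsupp.support_smul ha

section CommSemiring

variable [CommSemiring k] {f : G → ι} {i j : ι} {a b x : MonoidAlgebra k G}

theorem single_mem_gradeBy (f : G → ι) (g : G) (c : k) : single g c ∈ gradeBy k f (f g) := by
  intro h hh
  rw [Finset.mem_singleton.mp (Finsupp.support_single_subset hh)]

theorem eq_zero_of_mem_gradeBy_of_ne (hij : i ≠ j) (hi : a ∈ gradeBy k f i)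
    (hj : a ∈ gradeBy k f j) : a = 0 :=
  coeff_injective <| Finsupp.support_eq_empty.mp <|
    Finset.eq_empty_of_forall_notMem fun g hg => hij ((hi g hg).symm.trans (hj g hg))

theorem exists_add_eq_of_forall_eq_or_eq (hf : ∀ g, f g = i ∨ f g = j) (x : MonoidAlgebra k G) :
    ∃ a ∈ gradeBy k f i, ∃ b ∈ gradeBy k f j, a + b = x := by
  induction x using induction_linear with
  | zero => exact ⟨0, zero_mem _, 0, zero_mem _, add_zero 0⟩
  | add x y hx hy =>
    obtain ⟨a, ha, b, hb, rfl⟩ := hx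
    obtain ⟨a', ha', b', hb', rfl⟩ := hy
    exact ⟨a + a', add_mem ha ha', b + b', add_mem hb hb', add_add_add_comm _ _ _ _⟩
  | single g c =>
    rcases hf g with hg | hg
    · exact ⟨single g c, hg ▸ single_mem_gradeBy f g c, 0, zero_mem _, add_zero _⟩
    · exact ⟨0, zero_mem _, single g c, hg ▸ single_mem_gradeBy f g c, zero_add _⟩

@[elab_as_elim]
theorem gradeBy_induction {motive : ∀ x, x ∈ gradeBy k f i → Prop}
    (zero : motive 0 (zero_mem _))
    (add : ∀ a ha b hb, motive a ha → motive b hb → motive (a + b) (add_mem ha hb))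
    (single : ∀ g c (hg : f g = i), motive (single g c) (hg ▸ single_mem_gradeBy f g c))
    (hx : x ∈ gradeBy k f i) : motive x hx := by
  obtain ⟨_, h⟩ : ∃ hx', motive x hx' := by
    rw [← sum_coeff_single x]
    exact Finset.sum_induction _ (fun a => ∃ ha, motive a ha)
      (fun a b ⟨ha, ma⟩ ⟨hb, mb⟩ => ⟨_, add a ha b hb ma mb⟩) ⟨_, zero⟩
      fun g hg => ⟨_, single g _ (hx g hg)⟩
  exact h

theorem mapDomain_of_mem_gradeBy (hx : x ∈ gradeBy k f i) :
    mapDomain f x = single i (x.coeff.sum fun _ c => c) := by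
  induction hx using gradeBy_induction with
  | zero => simp
  | add a _ b _ ha hb =>
    rw [mapDomain_add, ha, hb, ← single_add, coeff_add,
      Finsupp.sum_add_index' (fun _ => rfl) fun _ _ _ => rfl]
  | single g c hg => rw [mapDomain_single, hg, coeff_single, Finsupp.sum_single_index rfl]

theorem commute_of_mem_gradeBy [Mul G] (hcomm : ∀ g h, f g = i → f h = j → Commute g h)
    (ha : a ∈ gradeBy k f i) (hb : b ∈ gradeBy k f j) : Commute a b := by
  induction ha using gradeBy_induction with
  | zero => exact Commute.zero_left b
  | add a _ a' _ ha ha' => exact ha.add_left ha'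
  | single g c hg =>
    induction hb using gradeBy_induction with
    | zero => exact Commute.zero_right _
    | add b _ b' _ hb hb' => exact hb.add_right hb'
    | single h d hh =>
      rw [Commute, SemiconjBy, single_mul_single, single_mul_single, (hcomm g h hg hh).eq,
        mul_comm c]

theorem mul_mem_gradeBy [Monoid G] [Monoid ι] {f : G →* ι} (ha : a ∈ gradeBy k f i)
    (hb : b ∈ gradeBy k f j) : a * b ∈ gradeBy k f (i * j) := by
  classical
  intro g hg
  obtain ⟨x, hx, y, hy, rfl⟩ := Finset.mem_mul.mp (support_coeff_mul_subset a b hg)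
  rw [map_mul, ha x hx, hb y hy]

theorem one_mem_gradeBy [Monoid G] [Monoid ι] (f : G →* ι) :
    (1 : MonoidAlgebra k G) ∈ gradeBy k f 1 :=
  map_one f ▸ single_mem_gradeBy f 1 1

theorem mapDomain_inv_mem_gradeBy [Group G] [Group ι] {f : G →* ι} (hx : x ∈ gradeBy k f i) :
    mapDomain (·⁻¹) x ∈ gradeBy k f i⁻¹ := by
  classical
  intro g hg
  obtain ⟨h, hh, rfl⟩ := Finset.mem_image.mp (Finsupp.mapDomain_support hg)
  rw [map_inv, hx h hh]

theorem mapDomain_inv_eq_self_of_mem_gradeBy [Group G] (hf : ∀ g, f g = i → g⁻¹ = g)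
    (hx : x ∈ gradeBy k f i) : mapDomain (·⁻¹) x = x := by
  induction hx using gradeBy_induction with
  | zero => exact mapDomain_zero _
  | add a _ b _ ha hb => rw [mapDomain_add, ha, hb]
  | single g c hg => rw [mapDomain_single, hf g hg]

theorem mul_eq_mapDomain_inv_mul_of_mem_gradeBy [Group G]
    (hfg : ∀ g h, f g = i → f h = j → g * h = h⁻¹ * g)
    (ha : a ∈ gradeBy k f i) (hb : b ∈ gradeBy k f j) : a * b = mapDomain (·⁻¹) b * a := by
  induction ha using gradeBy_induction with
  | zero => rw [zero_mul, mul_zero]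
  | add a _ a' _ ha ha' => rw [add_mul, mul_add, ha, ha']
  | single g c hg =>
    induction hb using gradeBy_induction with
    | zero => rw [mul_zero, mapDomain_zero, zero_mul]
    | add b _ b' _ hb hb' => rw [mul_add, mapDomain_add, add_mul, hb, hb']
    | single h d hh =>
      rw [mapDomain_single, single_mul_single, single_mul_single, hfg g h hg hh, mul_comm c]

end CommSemiring

theorem eq_and_eq_of_add_eq_add_of_mem_gradeBy [CommRing k] {f : G → ι} {i j : ι}
    {a b a' b' : MonoidAlgebra k G} (hij : i ≠ j) (ha : a ∈ gradeBy k f i)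
    (ha' : a' ∈ gradeBy k f i) (hb : b ∈ gradeBy k f j) (hb' : b' ∈ gradeBy k f j)
    (h : a + b = a' + b') : a = a' ∧ b = b' := by
  have hab : a - a' = b' - b := by rw [sub_eq_sub_iff_add_eq_add, h, add_comm]
  have hzero : a - a' = 0 :=
    eq_zero_of_mem_gradeBy_of_ne hij (sub_mem ha ha') (hab ▸ sub_mem hb' hb)
  exact ⟨sub_eq_zero.mp hzero, (sub_eq_zero.mp (hab ▸ hzero)).symm⟩

end Grading

section AugmentationIdeal

variable {k G R : Type*} [CommRing k] [Monoid G] [Ring R] {S : Set G} {x : MonoidAlgebra k G}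

theorem map_eq_one_of_sub_one_mem_span (φ : MonoidAlgebra k G →+* R)
    (hφ : ∀ h ∈ S, φ (of k G h) = 1)
    (hx : x - 1 ∈ Ideal.span ((fun h => of k G h - 1) '' S)) : φ x = 1 := by
  have hspan : Ideal.span ((fun h => of k G h - 1) '' S) ≤ RingHom.ker φ := by
    rw [Ideal.span_le]
    rintro _ ⟨h, hh, rfl⟩
    rw [SetLike.mem_coe, RingHom.mem_ker, map_sub, map_one, hφ h hh, sub_self]
  rw [← sub_eq_zero, ← map_one φ, ← map_sub]
  exact hspan hx

theorem sub_one_mem_span_of_support_subset (hx : ∀ g ∈ x.coeff.support, g ∈ S)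
    (haug : (x.coeff.sum fun _ c => c) = 1) :
    x - 1 ∈ Ideal.span ((fun h => of k G h - 1) '' S) := by
  have hsum : x - 1 = ∑ g ∈ x.coeff.support, x.coeff g • (of k G g - 1) := by
    simp only [smul_sub, Finset.sum_sub_distrib, ← Finset.sum_smul]
    rw [show ∑ g ∈ x.coeff.support, x.coeff g = 1 from haug, one_smul]
    congr
    conv_lhs => rw [← sum_coeff_single x]
    simp [Finsupp.sum, smul_single]
  rw [hsum]
  exact Ideal.sum_mem _ fun g hg =>
    Submodule.smul_of_tower_mem _ _ (Ideal.subset_span ⟨g, hx g hg, rfl⟩)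

end AugmentationIdeal

end MonoidAlgebra

namespace DihedralGroup

variable {n : ℕ}

def sign : DihedralGroup n →* ℤˣ where
  toFun
    | r _ => 1
    | sr _ => -1
  map_one' := rfl
  map_mul' := by rintro (i | i) (j | j) <;> simp

@[simp] theorem sign_r (i : ZMod n) : sign (r i) = 1 := rfl

@[simp] theorem sign_sr (i : ZMod n) : sign (sr i) = -1 := rfl

theorem sign_eq_one_or_eq_neg_one (g : DihedralGroup n) : sign g = 1 ∨ sign g = -1 :=
  Int.units_eq_one_or _

theorem zpowers_r_one_eq_ker_sign : Subgroup.zpowers (r 1 : DihedralGroup n) = sign.ker := by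
  refine le_antisymm (Subgroup.zpowers_le.mpr rfl) fun g hg => ?_
  rcases g with i | i
  · exact ⟨(i.cast : ℤ), by simp⟩
  · simp at hg

theorem commute_of_sign_eq_one {g h : DihedralGroup n} (hg : sign g = 1) (hh : sign h = 1) :
    Commute g h := by
  rcases g with i | i <;> rcases h with j | j <;> simp_all [Commute, SemiconjBy, add_comm]

theorem mul_eq_inv_mul_of_sign {g h : DihedralGroup n} (hg : sign g = -1) (hh : sign h = 1) :
    g * h = h⁻¹ * g := by
  rcases g with i | i <;> rcases h with j | j <;> simp_all

theorem inv_eq_self_of_sign_eq_neg_one {g : DihedralGroup n} (hg : sign g = -1) : g⁻¹ = g := by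
  rcases g with i | i <;> simp_all

theorem pow_eq_one_of_sign_eq_one {g : DihedralGroup n} (hg : sign g = 1) : g ^ n = 1 := by
  rcases g with i | i
  · rw [r_pow, ZMod.natCast_self, mul_zero, r_zero]
  · simp at hg

end DihedralGroup

theorem mul_pow_eq_self_of_mul_mul_self_eq_self {R : Type*} [Monoid R] {w : R}
    (hw : w * w * w = w) (m : ℕ) : w * (w * w) ^ m = w := by
  induction m with
  | zero => rw [pow_zero, mul_one]
  | succ m ih => rw [pow_succ, ← mul_assoc, ih, ← mul_assoc, hw]

namespace MonoidAlgebra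

open DihedralGroup

variable {k : Type*} [CommRing k] {p : ℕ} [Fact p.Prime] [CharP k p]

theorem pow_char_of_mem_gradeBy_sign_one {x : MonoidAlgebra k (DihedralGroup p)}
    (hx : x ∈ gradeBy k sign 1) :
    x ^ p = single 1 ((x.coeff.sum fun _ c => c) ^ p) := by
  have : CharP (MonoidAlgebra k (DihedralGroup p)) p :=
    charP_of_injective_algebraMap single_right_injective p
  induction hx using gradeBy_induction with
  | zero => simp [(Fact.out : p.Prime).ne_zero]
  | add a ha b hb ha' hb' =>
    have hab := commute_of_mem_gradeBy (fun _ _ => commute_of_sign_eq_one) ha hb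
    rw [add_pow_char_of_commute _ hab, ha', hb', ← single_add, ← add_pow_char, coeff_add,
      Finsupp.sum_add_index' (fun _ => rfl) fun _ _ _ => rfl]
  | single g c hg =>
    rw [single_pow, pow_eq_one_of_sign_eq_one hg, coeff_single, Finsupp.sum_single_index rfl]

theorem eq_zero_of_mul_mul_self_eq_self {w : MonoidAlgebra k (DihedralGroup p)}
    (hw : w ∈ gradeBy k sign (-1))
    (haug : (w.coeff.sum fun _ c => c) = 0) (hw3 : w * w * w = w) : w = 0 := by
  have hww : w * w ∈ gradeBy k sign 1 := by simpa using mul_mem_gradeBy hw hw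
  have haug_ww : ((w * w).coeff.sum fun _ c => c) = 0 := by
    have h := map_mul (mapDomainRingHom k sign) w w
    rw [mapDomainRingHom_apply, mapDomainRingHom_apply, mapDomain_of_mem_gradeBy hw, haug,
      mapDomain_of_mem_gradeBy hww, single_zero, zero_mul, single_eq_zero] at h
    exact h
  calc w = w * (w * w) ^ p := (mul_pow_eq_self_of_mul_mul_self_eq_self hw3 p).symm
    _ = 0 := by
      rw [pow_char_of_mem_gradeBy_sign_one hww, haug_ww, zero_pow (Fact.out : p.Prime).ne_zero,
        single_zero, mul_zero]

end MonoidAlgebra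

section DihedralGroupAlgebra

open DihedralGroup

variable {p : ℕ} {F : Type} [Field F]

theorem invo_eq_mapDomain (x : FG p F) : invo p F x = mapDomain (·⁻¹) x := by
  rw [invo, Finsupp.equivMapDomain_eq_mapDomain]; rfl

theorem memFA_iff_mem_gradeBy {x : FG p F} : memFA p F x ↔ x ∈ gradeBy F sign 1 := by
  simp only [memFA, Asub, aa, zpowers_r_one_eq_ker_sign, MonoidHom.mem_ker]
  rfl

theorem aug_eq_one_and_aug_eq_zero_of_add_mem_oneGamma {u w : FG p F}
    (hu : u ∈ gradeBy F sign 1) (hw : w ∈ gradeBy F sign (-1)) (hx : u + w ∈ oneGamma p F) :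
    aug p F u = 1 ∧ aug p F w = 0 := by
  have hA : ∀ h ∈ Asub p, mapDomainRingHom F sign (of F _ h) = 1 := fun h hh => by
    rw [of_apply, mapDomainRingHom_apply, mapDomain_single,
      MonoidHom.mem_ker.mp (zpowers_r_one_eq_ker_sign ▸ hh), ← MonoidAlgebra.one_def]
  have h := map_eq_one_of_sub_one_mem_span _ hA hx
  rw [map_add, mapDomainRingHom_apply, mapDomainRingHom_apply, mapDomain_of_mem_gradeBy hu,
    mapDomain_of_mem_gradeBy hw, ← add_zero (1 : MonoidAlgebra F ℤˣ),
    ← single_zero (-1 : ℤˣ)] at h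
  obtain ⟨h1, h2⟩ := eq_and_eq_of_add_eq_add_of_mem_gradeBy (f := id) (by decide)
    (single_mem_gradeBy _ _ _) (single_mem_gradeBy _ _ _) (single_mem_gradeBy _ _ _)
    (single_mem_gradeBy _ _ _) h
  exact ⟨single_right_inj.mp h1, single_right_inj.mp h2⟩

theorem mul_mul_self_eq_self_of_invo_mul_eq_one (h2 : (2 : F) ≠ 0) {u w : FG p F}
    (hu : u ∈ gradeBy F sign 1) (hw : w ∈ gradeBy F sign (-1))
    (h : invo p F (u + w) * (u + w) = 1) : w * w * w = w := by
  set u' := invo p F u with hu'_def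
  have hu' : u' ∈ gradeBy F sign 1 := by
    simpa [hu'_def, invo_eq_mapDomain] using mapDomain_inv_mem_gradeBy hu
  have hinvo : invo p F (u + w) = u' + w := by
    rw [invo_eq_mapDomain, mapDomain_add, ← invo_eq_mapDomain,
      mapDomain_inv_eq_self_of_mem_gradeBy (fun _ => inv_eq_self_of_sign_eq_neg_one) hw]
  have hwu : w * u = u' * w := by
    rw [hu'_def, invo_eq_mapDomain]
    exact mul_eq_mapDomain_inv_mul_of_mem_gradeBy (fun _ _ => mul_eq_inv_mul_of_sign) hw hu
  have hexpand : (u' * u + w * w) + (u' * w + u' * w) = 1 + 0 := by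
    rw [add_zero, ← h, hinvo, add_mul, mul_add, mul_add, hwu]
    abel
  have hsym_mem : u' * u + w * w ∈ gradeBy F sign 1 :=
    add_mem (by simpa using mul_mem_gradeBy hu' hu) (by simpa using mul_mem_gradeBy hw hw)
  have hskew_mem : u' * w + u' * w ∈ gradeBy F sign (-1) := by
    simpa using add_mem (mul_mem_gradeBy hu' hw) (mul_mem_gradeBy hu' hw)
  obtain ⟨hsym, hskew⟩ := eq_and_eq_of_add_eq_add_of_mem_gradeBy (show (1 : ℤˣ) ≠ -1 by decide)
    hsym_mem (one_mem_gradeBy sign) hskew_mem (zero_mem _) hexpand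
  have hu'w : u' * w = 0 := by
    rw [← two_smul F, smul_eq_zero] at hskew
    exact hskew.resolve_left h2
  calc w * w * w = w * (1 - u * u') := by
        rw [← (commute_of_mem_gradeBy (fun _ _ => commute_of_sign_eq_one) hu' hu).eq,
          ← hsym, add_sub_cancel_left, mul_assoc]
    _ = w := by rw [mul_sub, mul_one, ← mul_assoc, hwu, hu'w, zero_mul, sub_zero]

end DihedralGroupAlgebra

theorem stmt1_general (p : ℕ) (hp : p.Prime) (hodd : Odd p)
    (F : Type) [Field F] [CharP F p] :
    {x : FG p F | x ∈ oneGamma p F ∧ IsUnitary p F x} = VstarFA p F := by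
  have : Fact p.Prime := ⟨hp⟩
  have h2 : (2 : F) ≠ 0 := Ring.two_ne_zero <| by
    rw [ringChar.eq F p]
    rintro rfl
    exact Nat.not_odd_iff_even.mpr even_two hodd
  ext x
  constructor
  · rintro ⟨hx, hunit⟩
    obtain ⟨u, hu, w, hw, rfl⟩ :=
      exists_add_eq_of_forall_eq_or_eq (k := F) DihedralGroup.sign_eq_one_or_eq_neg_one x
    obtain ⟨haug_u, haug_w⟩ := aug_eq_one_and_aug_eq_zero_of_add_mem_oneGamma hu hw hx
    obtain rfl : w = 0 := eq_zero_of_mul_mul_self_eq_self hw haug_w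
      (mul_mul_self_eq_self_of_invo_mul_eq_one h2 hu hw hunit.2)
    rw [add_zero] at hunit ⊢
    exact ⟨memFA_iff_mem_gradeBy.mpr hu, haug_u, hunit⟩
  · rintro ⟨hA, haug, hunit⟩
    exact ⟨sub_one_mem_span_of_support_subset hA haug, hunit⟩

/-- The unitary units of the group `1 + Γ(A)` are exactly `V_*(FA)`. -/
theorem stmt1 (p : ℕ) (hp : p.Prime) (hodd : Odd p)
    (F : Type) [Field F] [Fintype F] [CharP F p] :
    {x : FG p F | x ∈ oneGamma p F ∧ IsUnitary p F x} = VstarFA p F :=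
  stmt1_general p hp hodd F
end
end

section
/- For all 1 ≤ i, j ≤ l one has ω_i ω_j = 0 and ω_i' ω_j' = 0, and moreover ω_i ω_i' = 2(a^{2i} + a^{−2i} − 2)(1 − b) and ω_i' ω_i = 2(a^{2i} + a^{−2i} − 2)(1 + b) in FD_{2p}. -/
noncomputable section

open MonoidAlgebra

/-- `ω_i = (a^i - a^{-i})(1 + b)`. -/
def ww (p : ℕ) (F : Type) [Field F] (i : ℕ) : FG p F :=
  ((of F (Dg p) ((aa p) ^ i) : FG p F) - of F (Dg p) ((aa p) ^ i)⁻¹) *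
    (1 + of F (Dg p) (bb p))

/-- `ω_i' = (a^i - a^{-i})(1 - b)`. -/
def ww' (p : ℕ) (F : Type) [Field F] (i : ℕ) : FG p F :=
  ((of F (Dg p) ((aa p) ^ i) : FG p F) - of F (Dg p) ((aa p) ^ i)⁻¹) *
    (1 - of F (Dg p) (bb p))

/-!
Write `B = b` and `X = a^i - a^{-i}`. Since `b` inverts `a`, `X` anticommutes with the involution
`B`, so `(1 ± B) X = X (1 ∓ B)`. Moving `X` across therefore turns `ω_i ω_j` into
`X_i X_j (1 - B)(1 + B) = 0`, while `ω_i ω_i'` becomes `X_i² (1 - B)² = 2 X_i² (1 - B)`, and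
`X_i² = a^{2i} + a^{-2i} - 2`. The primed identities are the same ones for the involution `-B`.
-/

section Anticommuting

variable {R : Type*} [Ring R] {B : R}

lemma one_add_mul_eq_mul_one_sub {X : R} (hX : B * X = -(X * B)) :
    (1 + B) * X = X * (1 - B) := by
  rw [add_mul, hX, mul_sub]
  noncomm_ring

lemma mul_one_add_mul_mul_one_add_eq_zero (hB : B * B = 1) (X : R) {Y : R}
    (hY : B * Y = -(Y * B)) : X * (1 + B) * (Y * (1 + B)) = 0 := by
  have h : (1 - B) * (1 + B) = 0 := by
    calc (1 - B) * (1 + B) = 1 - B * B := by noncomm_ring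
      _ = 0 := by rw [hB, sub_self]
  calc X * (1 + B) * (Y * (1 + B)) = X * ((1 + B) * Y) * (1 + B) := by noncomm_ring
    _ = X * Y * ((1 - B) * (1 + B)) := by rw [one_add_mul_eq_mul_one_sub hY]; noncomm_ring
    _ = 0 := by rw [h, mul_zero]

lemma mul_one_add_mul_mul_one_sub (hB : B * B = 1) (X : R) {Y : R}
    (hY : B * Y = -(Y * B)) : X * (1 + B) * (Y * (1 - B)) = 2 * (X * Y) * (1 - B) := by
  have h : (1 - B) * (1 - B) = 2 * (1 - B) := by
    calc (1 - B) * (1 - B) = 1 - 2 * B + B * B := by noncomm_ring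
      _ = 2 * (1 - B) := by rw [hB]; noncomm_ring
  calc X * (1 + B) * (Y * (1 - B)) = X * ((1 + B) * Y) * (1 - B) := by noncomm_ring
    _ = X * Y * ((1 - B) * (1 - B)) := by rw [one_add_mul_eq_mul_one_sub hY]; noncomm_ring
    _ = 2 * (X * Y) * (1 - B) := by rw [h]; noncomm_ring

lemma mul_one_sub_mul_mul_one_sub_eq_zero (hB : B * B = 1) (X : R) {Y : R}
    (hY : B * Y = -(Y * B)) : X * (1 - B) * (Y * (1 - B)) = 0 := by
  simpa only [sub_eq_add_neg] using
    mul_one_add_mul_mul_one_add_eq_zero (B := -B) (by rwa [neg_mul_neg]) X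
      (by rw [neg_mul, mul_neg, hY])

lemma mul_one_sub_mul_mul_one_add (hB : B * B = 1) (X : R) {Y : R}
    (hY : B * Y = -(Y * B)) : X * (1 - B) * (Y * (1 + B)) = 2 * (X * Y) * (1 + B) := by
  simpa only [sub_eq_add_neg, neg_neg] using
    mul_one_add_mul_mul_one_sub (B := -B) (by rwa [neg_mul_neg]) X
      (by rw [neg_mul, mul_neg, hY])

end Anticommuting

namespace MonoidAlgebra

variable {k G : Type*} [Ring k] [Group G]

lemma of_mul_of_sub_of_inv {b g : G} (h : b * g = g⁻¹ * b) :
    of k G b * (of k G g - of k G g⁻¹) = -((of k G g - of k G g⁻¹) * of k G b) := by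
  have h' : b * g⁻¹ = g * b := by
    calc b * g⁻¹ = g * (g⁻¹ * b) * g⁻¹ := by group
      _ = g * b := by rw [← h]; group
  simp only [mul_sub, sub_mul, ← map_mul, h, h', neg_sub]

lemma of_sub_of_inv_mul_self (g : G) :
    (of k G g - of k G g⁻¹) * (of k G g - of k G g⁻¹) = of k G (g ^ 2) + of k G (g ^ 2)⁻¹ - 2 := by
  have hg : of k G g * of k G g⁻¹ = 1 := by rw [← map_mul, mul_inv_cancel, map_one]
  have hg' : of k G g⁻¹ * of k G g = 1 := by rw [← map_mul, inv_mul_cancel, map_one]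
  rw [sq, mul_inv_rev, map_mul, map_mul]
  calc _ = of k G g * of k G g + of k G g⁻¹ * of k G g⁻¹
        - (of k G g * of k G g⁻¹ + of k G g⁻¹ * of k G g) := by noncomm_ring
    _ = _ := by rw [hg, hg', one_add_one_eq_two]

end MonoidAlgebra

lemma DihedralGroup.sr_mul_r_eq_inv_mul {n : ℕ} (i j : ZMod n) : sr i * r j = (r j)⁻¹ * sr i := by
  rw [sr_mul_r, inv_r, r_mul_sr, sub_neg_eq_add, add_comm]

lemma bb_mul_aa_pow (p n : ℕ) : bb p * aa p ^ n = (aa p ^ n)⁻¹ * bb p := by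
  rw [aa, bb, DihedralGroup.r_one_pow, DihedralGroup.sr_mul_r_eq_inv_mul]

theorem stmt6_general (p : ℕ)
    (F : Type) [Field F] :
    ∀ l : ℕ, l = (p - 1) / 2 →
    ∀ i j : ℕ, 1 ≤ i → i ≤ l → 1 ≤ j → j ≤ l →
      ww p F i * ww p F j = 0 ∧
      ww' p F i * ww' p F j = 0 ∧
      ww p F i * ww' p F i =
        2 * ((of F (Dg p) ((aa p) ^ (2 * i)) : FG p F)
              + of F (Dg p) ((aa p) ^ (2 * i))⁻¹ - 2) * (1 - of F (Dg p) (bb p)) ∧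
      ww' p F i * ww p F i =
        2 * ((of F (Dg p) ((aa p) ^ (2 * i)) : FG p F)
              + of F (Dg p) ((aa p) ^ (2 * i))⁻¹ - 2) * (1 + of F (Dg p) (bb p)) := by
  intro _ _ i j _ _ _ _
  have hB : (of F (Dg p) (bb p) : FG p F) * of F (Dg p) (bb p) = 1 := by
    rw [← map_mul, bb, DihedralGroup.sr_mul_self, map_one]
  have hX (n : ℕ) := MonoidAlgebra.of_mul_of_sub_of_inv (k := F) (bb_mul_aa_pow p n)
  have hXsq : _ = _ := MonoidAlgebra.of_sub_of_inv_mul_self (k := F) (aa p ^ i)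
  rw [← pow_mul'] at hXsq
  refine ⟨mul_one_add_mul_mul_one_add_eq_zero hB _ (hX j),
    mul_one_sub_mul_mul_one_sub_eq_zero hB _ (hX j), ?_, ?_⟩
  · rw [ww, ww', mul_one_add_mul_mul_one_sub hB _ (hX i), hXsq]
  · rw [ww', ww, mul_one_sub_mul_mul_one_add hB _ (hX i), hXsq]

/-- For `1 ≤ i, j ≤ l`: `ω_iω_j = 0`, `ω_i'ω_j' = 0`,
`ω_iω_i' = 2(a^{2i} + a^{-2i} - 2)(1 - b)` and `ω_i'ω_i = 2(a^{2i} + a^{-2i} - 2)(1 + b)`. -/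
theorem stmt6 (p : ℕ) (hp : p.Prime) (hodd : Odd p)
    (F : Type) [Field F] [Fintype F] [CharP F p] :
    ∀ l : ℕ, l = (p - 1) / 2 →
    ∀ i j : ℕ, 1 ≤ i → i ≤ l → 1 ≤ j → j ≤ l →
      ww p F i * ww p F j = 0 ∧
      ww' p F i * ww' p F j = 0 ∧
      ww p F i * ww' p F i =
        2 * ((of F (Dg p) ((aa p) ^ (2 * i)) : FG p F)
              + of F (Dg p) ((aa p) ^ (2 * i))⁻¹ - 2) * (1 - of F (Dg p) (bb p)) ∧
      ww' p F i * ww p F i =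
        2 * ((of F (Dg p) ((aa p) ^ (2 * i)) : FG p F)
              + of F (Dg p) ((aa p) ^ (2 * i))⁻¹ - 2) * (1 + of F (Dg p) (bb p)) :=
  stmt6_general p F
end
end

section
/- The center of the group 1 + Γ(A) equals the intersection of the center of the algebra FD_{2p} with 1 + Γ(A): Z(1 + Γ(A)) = Z(FD_{2p}) ∩ (1 + Γ(A)). -/
noncomputable section

open MonoidAlgebra

/-- The center of the group `1 + Γ(A)`. -/
def Zcen (p : ℕ) (F : Type) [Field F] : Set (FG p F) :=
  {x | x ∈ oneGamma p F ∧ ∀ y ∈ oneGamma p F, x * y = y * x}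

/-- `Â = 1 + a + a² + ⋯ + a^{p-1}`. -/
def Ahat (p : ℕ) (F : Type) [Field F] : FG p F :=
  ∑ j ∈ Finset.range p, of F (Dg p) ((aa p) ^ j)

/-!
Write `ω` for the left ideal of `k[G]` spanned by the `h - 1`, `h ∈ H`, for a subgroup `H` of index
two. If `x` commutes with `ω`, it commutes with each `h ∈ H`, and for any `g` the commutator
`c = x g - g x` satisfies `c (h - 1) = 0`, since `x` commutes with both `h - 1` and `g (h - 1) ∈ ω`.
So the coefficients of `c` are constant on the left cosets `H` and `gH`, which exhaust `G` when
`g ∉ H`; as `c` has coefficient `0` at `1` and at `g`, we get `c = 0`. Thus `x` is central.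
For `D_{2p}` and `A = ⟨a⟩` this is the nontrivial inclusion `Z(1 + Γ(A)) ⊆ Z(FD_{2p})`.
-/

namespace MonoidAlgebra

lemma commute_of_forall_commute_of {k M : Type*} [CommSemiring k] [Monoid M]
    {x : MonoidAlgebra k M} (hx : ∀ m, Commute x (of k M m)) (y : MonoidAlgebra k M) :
    Commute x y := by
  induction y using induction_on with
  | of m => exact hx m
  | add y z hy hz => exact hy.add_right hz
  | smul r y hy => exact hy.smul_right r

variable {k G : Type*} [Group G]

lemma coeff_mul_eq_of_mul_of_eq_self [Semiring k] {c : MonoidAlgebra k G} {h : G}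
    (hc : c * of k G h = c) (g : G) : c.coeff (g * h) = c.coeff g := by
  conv_lhs => rw [← hc]
  simp [of_apply]

lemma coeff_commutator_of_one [Ring k] (x : MonoidAlgebra k G) (g : G) :
    (x * of k G g - of k G g * x).coeff 1 = 0 := by
  simp [of_apply]

lemma coeff_commutator_of_self [Ring k] (x : MonoidAlgebra k G) (g : G) :
    (x * of k G g - of k G g * x).coeff g = 0 := by
  simp [of_apply]

lemma commutator_mul_of_eq_self [Ring k] {x : MonoidAlgebra k G} {g h : G}
    (hxh : Commute x (of k G h - 1)) (hxgh : Commute x (of k G g * (of k G h - 1))) :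
    (x * of k G g - of k G g * x) * of k G h = x * of k G g - of k G g * x := by
  rw [← sub_eq_zero, ← mul_sub_one]
  calc (x * of k G g - of k G g * x) * (of k G h - 1)
      = x * (of k G g * (of k G h - 1)) - of k G g * (x * (of k G h - 1)) := by
        simp only [sub_mul, mul_assoc]
    _ = of k G g * (of k G h - 1) * x - of k G g * ((of k G h - 1) * x) := by
        rw [hxgh.eq, hxh.eq]
    _ = 0 := by rw [mul_assoc, sub_self]

theorem commute_of_forall_commute_span_of_sub_one [CommRing k] {H : Subgroup G}
    (hH : H.index = 2) {x : MonoidAlgebra k G}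
    (hx : ∀ γ ∈ Ideal.span ((fun h => of k G h - 1) '' (H : Set G)), Commute x γ)
    (y : MonoidAlgebra k G) : Commute x y := by
  have hsub : ∀ h ∈ H, Commute x (of k G h - 1) :=
    fun h hh => hx _ (Ideal.subset_span ⟨h, hh, rfl⟩)
  refine commute_of_forall_commute_of (fun g => ?_) y
  by_cases hg : g ∈ H
  · simpa using (hsub g hg).add_right (Commute.one_right x)
  have hc : ∀ h ∈ H, (x * of k G g - of k G g * x) * of k G h = x * of k G g - of k G g * x :=
    fun h hh => commutator_mul_of_eq_self (hsub h hh)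
      (hx _ (Ideal.mul_mem_left _ _ (Ideal.subset_span ⟨h, hh, rfl⟩)))
  rw [commute_iff_eq, ← sub_eq_zero]
  ext z
  rw [coeff_zero, Finsupp.coe_zero, Pi.zero_apply]
  by_cases hz : z ∈ H
  · rw [← one_mul z, coeff_mul_eq_of_mul_of_eq_self (hc z hz)]
    exact coeff_commutator_of_one x g
  · have hgz : g⁻¹ * z ∈ H := by
      rw [Subgroup.mul_mem_iff_of_index_two hH, Subgroup.inv_mem_iff]
      tauto
    rw [← mul_inv_cancel_left g z, coeff_mul_eq_of_mul_of_eq_self (hc _ hgz)]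
    exact coeff_commutator_of_self x g

end MonoidAlgebra

namespace DihedralGroup

lemma index_zpowers_r_one (n : ℕ) : (Subgroup.zpowers (r 1 : DihedralGroup n)).index = 2 := by
  have hr : ∀ i : ZMod n, r i ∈ Subgroup.zpowers (r 1 : DihedralGroup n) := fun i => by
    obtain ⟨m, rfl⟩ := ZMod.intCast_surjective i
    exact ⟨m, r_one_zpow m⟩
  have hsr : ∀ i : ZMod n, sr i ∉ Subgroup.zpowers (r 1 : DihedralGroup n) := by
    rintro i ⟨m, hm⟩
    change r 1 ^ m = sr i at hm
    rw [r_one_zpow] at hm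
    cases hm
  refine Subgroup.index_eq_two_iff_exists_notMem_and'.2 ⟨sr 0, hsr 0, fun b => ?_⟩
  cases b with
  | r i => exact Or.inr (hr i)
  | sr i => exact Or.inl (sr_mul_sr 0 i ▸ hr _)

end DihedralGroup

theorem stmt8_general (p : ℕ) (F : Type) [Field F] :
    Zcen p F = {x : FG p F | (∀ y : FG p F, x * y = y * x) ∧ x ∈ oneGamma p F} := by
  ext x
  refine ⟨fun ⟨hx, hcomm⟩ => ⟨fun y => ?_, hx⟩, fun ⟨hcen, hx⟩ => ⟨hx, fun y _ => hcen y⟩⟩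
  refine MonoidAlgebra.commute_of_forall_commute_span_of_sub_one
    (DihedralGroup.index_zpowers_r_one p) (fun γ hγ => ?_) y
  have h := hcomm (1 + γ) (show 1 + γ - 1 ∈ gammaA p F by rwa [add_sub_cancel_left])
  simpa [mul_add, add_mul, commute_iff_eq] using h

/-- `Z(1 + Γ(A)) = Z(FD_{2p}) ∩ (1 + Γ(A))`. -/
theorem stmt8 (p : ℕ) (hp : p.Prime) (hodd : Odd p)
    (F : Type) [Field F] [Fintype F] [CharP F p] :
    Zcen p F = {x : FG p F | (∀ y : FG p F, x * y = y * x) ∧ x ∈ oneGamma p F} :=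
  stmt8_general p F
end
end

section
/- The center Z(1 + Γ(A)) of the group 1 + Γ(A) is the internal direct product of the group S_*(FA) of symmetric normalized units of FA with the group 1 + FÂb = { 1 + β Â b : β ∈ F }: every element of Z(1 + Γ(A)) is uniquely a product of an element of S_*(FA) and an element of 1 + FÂb, and these two subgroups commute elementwise and intersect trivially. -/
noncomputable section

open MonoidAlgebra

/-- The group `1 + FÂb = {1 + β Â b : β ∈ F}`. -/
def oneFAb (p : ℕ) (F : Type) [Field F] : Set (FG p F) :=
  {x | ∃ β : F, x = 1 + algebraMap F (FG p F) β * Ahat p F * of F (Dg p) (bb p)}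


/-!
Write `x ∈ FD_{2p}` as `Σ cᵢ aⁱ + Σ dᵢ aⁱb`. Conjugation by `a ∈ 1 + Γ(A)` shifts the
reflection coefficients by two, so for `x` central in `1 + Γ(A)` and `p` odd they are all
equal to one `β`; commuting with `b(a - 1) ∈ Γ(A)` makes `i ↦ cᵢ - c₋ᵢ` invariant under
`i ↦ i + 1`, so `cᵢ = c₋ᵢ`. These coefficient patterns make `x` constant on conjugacy
classes, hence central in all of `FD_{2p}`, and `x = s + βÂb` with `s = Σ cᵢ aⁱ ∈ FA`.
The augmentation of `x` is `Σ cᵢ + pβ = Σ cᵢ = 1`, so `sÂ = Â` and `x = s (1 + βÂb)`;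
`s` is a unit since `s - 1 = Σ cᵢ (aⁱ - 1)` is nilpotent in characteristic `p`.
Uniqueness and the trivial intersection are read off the coefficients of `s + βÂb`.
-/

open DihedralGroup

theorem Function.Periodic.zmod_apply_eq_apply_zero {n : ℕ} [NeZero n] {α : Type*}
    {f : ZMod n → α} {d : ZMod n} (hf : Function.Periodic f d) (hd : IsUnit d) (i : ZMod n) :
    f i = f 0 := by
  have h := hf.nat_mul (i * d⁻¹).val 0
  rwa [ZMod.natCast_zmod_val, mul_assoc, ZMod.inv_mul_of_unit d hd, mul_one, zero_add] at h

namespace MonoidAlgebra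

variable {k G : Type*} [CommSemiring k]

theorem commute_of_iff [Group G] {g : G} {x : k[G]} :
    Commute (of k G g) x ↔ ∀ h, x.coeff (g⁻¹ * h * g) = x.coeff h := by
  rw [commute_iff_eq, MonoidAlgebra.ext_iff, Finsupp.ext_iff]
  simp only [of_apply, coeff_single_mul_apply, coeff_mul_single_apply, one_mul, mul_one]
  constructor
  · intro H h
    simpa [mul_assoc] using H (h * g)
  · intro H h
    simpa [mul_assoc] using H (h * g⁻¹)

theorem mem_center_of_forall_commute_of [Monoid G] {x : k[G]}
    (hx : ∀ g, Commute (of k G g) x) : x ∈ Subalgebra.center k k[G] := by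
  refine Subalgebra.mem_center_iff.mpr fun y => ?_
  induction y using MonoidAlgebra.induction_on with
  | of g => exact (hx g).eq
  | add y z hy hz => rw [add_mul, mul_add, hy, hz]
  | smul c y hy => rw [smul_mul_assoc, mul_smul_comm, hy]

end MonoidAlgebra

namespace DihedralGroupAlgebra

open MonoidAlgebra

variable {p : ℕ} {F : Type} [Field F]

theorem coeff_invo (x : FG p F) (g : Dg p) : (invo p F x).coeff g = x.coeff g⁻¹ := rfl

theorem mem_center_of_coeff {x : FG p F} (hr : ∀ i, x.coeff (r (-i)) = x.coeff (r i))
    (hsr : ∀ i j, x.coeff (sr i) = x.coeff (sr j)) : x ∈ Subalgebra.center F (FG p F) := by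
  refine mem_center_of_forall_commute_of fun g => commute_of_iff.mpr fun h => ?_
  rcases g with j | j <;> rcases h with i | i <;>
    simp [r_mul_r, r_mul_sr, sr_mul_r, sr_mul_sr, hr] <;> exact hsr _ _

theorem r_mem_Asub (i : ZMod p) : r i ∈ Asub p :=
  ⟨i.cast, by simp [aa]⟩

theorem sr_notMem_Asub (i : ZMod p) : sr i ∉ Asub p := by
  rintro ⟨k, hk⟩
  simp [aa] at hk

theorem coeff_sr_eq_zero_of_memFA {x : FG p F} (hx : memFA p F x) (i : ZMod p) :
    x.coeff (sr i) = 0 :=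
  Finsupp.notMem_support_iff.mp fun h => sr_notMem_Asub i (hx _ h)

theorem of_sub_one_mem_gammaA {g : Dg p} (hg : g ∈ Asub p) : of F (Dg p) g - 1 ∈ gammaA p F :=
  Ideal.subset_span ⟨g, hg, rfl⟩

theorem aug_eq_one_of_mem_oneGamma {x : FG p F} (hx : x ∈ oneGamma p F) : aug p F x = 1 := by
  let ε := lift F F (Dg p) (1 : Dg p →* F)
  have hker : gammaA p F ≤ RingHom.ker ε :=
    Ideal.span_le.mpr <| by rintro _ ⟨g, -, rfl⟩; simp [ε]
  have h := hker hx
  rw [RingHom.mem_ker, map_sub, map_one, sub_eq_zero, lift_apply] at h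
  simpa [aug] using h

theorem mem_Zcen_of_mem_center {x : FG p F} (h1 : x ∈ oneGamma p F)
    (h2 : x ∈ Subalgebra.center F (FG p F)) : x ∈ Zcen p F :=
  ⟨h1, fun y _ => (Subalgebra.mem_center_iff.mp h2 y).symm⟩

theorem commute_of_mem_Zcen {x y : FG p F} (hx : x ∈ Zcen p F) (hy : y ∈ gammaA p F) :
    Commute x y := by
  have h := hx.2 (1 + y) (by simpa [oneGamma] using hy)
  rwa [mul_add, add_mul, mul_one, one_mul, add_right_inj] at h

theorem one_mem_SstarFA : (1 : FG p F) ∈ SstarFA p F := by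
  refine ⟨fun g hg => ?_, by simp [aug, MonoidAlgebra.one_def], isUnit_one, ?_⟩
  · simp only [MonoidAlgebra.one_def, coeff_single, Finsupp.support_single _ one_ne_zero,
      Finset.mem_singleton] at hg
    exact hg ▸ one_mem _
  · ext g
    simp [coeff_invo, MonoidAlgebra.one_def, Finsupp.single_apply, eq_comm]

theorem SstarFA_subset_center : SstarFA p F ⊆ Subalgebra.center F (FG p F) := by
  rintro s ⟨hmem, -, -, hinvo⟩
  refine mem_center_of_coeff (fun i => ?_) fun i j => by
    simp only [coeff_sr_eq_zero_of_memFA hmem]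
  simpa [coeff_invo] using congrArg (fun z => z.coeff (r i)) hinvo

theorem algebraMap_mul_Ahat_mul_bb (β : F) :
    algebraMap F (FG p F) β * Ahat p F * of F (Dg p) (bb p) =
      β • (Ahat p F * of F (Dg p) (bb p)) := by
  rw [mul_assoc, Algebra.smul_def]

instance charP [CharP F p] : CharP (FG p F) p := charP_of_injective_algebraMap' F p

variable [NeZero p]

theorem aug_eq_sum (x : FG p F) :
    aug p F x = ∑ i, x.coeff (r i) + ∑ i, x.coeff (sr i) := by
  rw [aug, Finsupp.sum_fintype _ _ fun _ => rfl, ← equivSum.symm.sum_comp, Fintype.sum_sum_type]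
  rfl

theorem coeff_sr_eq_of_mem_Zcen (hodd : Odd p) {x : FG p F} (hx : x ∈ Zcen p F) (i : ZMod p) :
    x.coeff (sr i) = x.coeff (sr 0) := by
  have ha : Commute (of F (Dg p) (r 1)) x := by
    simpa using ((commute_of_mem_Zcen hx (of_sub_one_mem_gammaA (r_mem_Asub 1))).add_right
      (Commute.one_right x)).symm
  have hper : Function.Periodic (fun i => x.coeff (sr i)) 2 := fun i => by
    simpa [r_mul_sr, sr_mul_r, add_assoc, one_add_one_eq_two] using commute_of_iff.mp ha (sr i)
  have h2 : IsUnit (2 : ZMod p) := by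
    simpa using (ZMod.isUnit_iff_coprime 2 p).mpr (Nat.coprime_two_left.mpr hodd)
  exact hper.zmod_apply_eq_apply_zero h2 i

theorem coeff_r_neg_of_mem_Zcen {x : FG p F} (hx : x ∈ Zcen p F) (i : ZMod p) :
    x.coeff (r (-i)) = x.coeff (r i) := by
  have hy : of F (Dg p) (sr 0) * (of F (Dg p) (r 1) - 1) = of F _ (sr 1) - of F _ (sr 0) := by
    rw [mul_sub, mul_one, ← map_mul, sr_mul_r, zero_add]
  have hcomm := (commute_of_mem_Zcen hx
    (hy ▸ Ideal.mul_mem_left _ _ (of_sub_one_mem_gammaA (r_mem_Asub 1)))).eq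
  have hper : Function.Periodic (fun k => x.coeff (r k) - x.coeff (r (-k))) 1 := fun k => by
    dsimp only
    have h := congrArg (fun z => z.coeff (sr (k + 1))) hcomm
    simp [mul_sub, sub_mul, of_apply, sr_mul_sr] at h
    rw [show -(k + 1) = -1 + -k by ring]
    linear_combination h
  simpa [sub_eq_zero] using hper.zmod_apply_eq_apply_zero isUnit_one (-i)

def rot (c : ZMod p → F) : FG p F := ∑ i, c i • of F (Dg p) (r i)

@[simp] theorem coeff_rot_r (c : ZMod p → F) (i : ZMod p) : (rot c).coeff (r i) = c i := by
  simp [rot, coeff_sum, of_apply, Finsupp.single_apply]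

@[simp] theorem coeff_rot_sr (c : ZMod p → F) (i : ZMod p) : (rot c).coeff (sr i) = 0 := by
  simp [rot, coeff_sum, of_apply]

theorem invo_rot {c : ZMod p → F} (hc : ∀ i, c (-i) = c i) : invo p F (rot c) = rot c := by
  ext (i | i) <;> simp [coeff_invo, hc]

theorem memFA_rot (c : ZMod p → F) : memFA p F (rot c) := by
  rintro (i | i) hi
  · exact r_mem_Asub i
  · simp at hi

theorem aug_rot (c : ZMod p → F) : aug p F (rot c) = ∑ i, c i := by
  simp [aug_eq_sum]

theorem rot_coeff_r_eq_self {x : FG p F} (hx : memFA p F x) :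
    rot (fun i => x.coeff (r i)) = x := by
  ext (i | i) <;> simp [coeff_sr_eq_zero_of_memFA hx]

theorem rot_sub_sum_smul_one (c : ZMod p → F) :
    rot c - (∑ i, c i) • 1 = ∑ i, c i • (of F (Dg p) (r i) - 1) := by
  simp only [rot, smul_sub, Finset.sum_sub_distrib, Finset.sum_smul]

theorem rot_sub_sum_smul_one_mem_gammaA (c : ZMod p → F) :
    rot c - (∑ i, c i) • 1 ∈ gammaA p F := by
  rw [rot_sub_sum_smul_one]
  exact Ideal.sum_mem _ fun i _ =>
    Submodule.smul_of_tower_mem _ _ (of_sub_one_mem_gammaA (r_mem_Asub i))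

theorem isNilpotent_rot_sub_sum_smul_one [Fact p.Prime] [CharP F p] (c : ZMod p → F) :
    IsNilpotent (rot c - (∑ i, c i) • 1) := by
  rw [rot_sub_sum_smul_one]
  refine Commute.isNilpotent_sum (fun i _ => ?_) fun i j _ _ => ?_
  · refine IsNilpotent.smul ⟨p, ?_⟩ _
    rw [sub_pow_char_of_commute _ (Commute.one_right _), ← map_pow, r_pow, one_pow,
      ZMod.natCast_self, mul_zero, r_zero, map_one, sub_self]
  · have hr : Commute (r i : Dg p) (r j) := by simp [commute_iff_eq, add_comm]
    exact (((hr.map (of F (Dg p))).sub_left (Commute.one_left _)).sub_right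
      ((Commute.one_right _).sub_left (Commute.one_left 1))).smul_left _ |>.smul_right _

theorem isUnit_rot [Fact p.Prime] [CharP F p] {c : ZMod p → F} (hc : ∑ i, c i = 1) :
    IsUnit (rot c) := by
  simpa [hc] using (isNilpotent_rot_sub_sum_smul_one c).isUnit_one_add

theorem rot_mem_SstarFA [Fact p.Prime] [CharP F p] {c : ZMod p → F} (hc : ∑ i, c i = 1)
    (hsymm : ∀ i, c (-i) = c i) : rot c ∈ SstarFA p F :=
  ⟨memFA_rot c, (aug_rot c).trans hc, isUnit_rot hc, invo_rot hsymm⟩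

theorem sum_coeff_r_of_mem_SstarFA {s : FG p F} (hs : s ∈ SstarFA p F) :
    ∑ i, s.coeff (r i) = 1 := by
  rw [← aug_rot, rot_coeff_r_eq_self hs.1]
  exact hs.2.1

theorem SstarFA_subset_oneGamma : SstarFA p F ⊆ oneGamma p F := fun s hs => by
  show s - 1 ∈ gammaA p F
  simpa [sum_coeff_r_of_mem_SstarFA hs, rot_coeff_r_eq_self hs.1] using
    rot_sub_sum_smul_one_mem_gammaA fun i => s.coeff (r i)

theorem Ahat_eq_rot : Ahat p F = rot fun _ => 1 := by
  simp only [Ahat, rot, one_smul, aa, r_one_pow,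
    ← Fin.sum_univ_eq_sum_range (fun j => of F (Dg p) (r j))]
  have hinj : Function.Injective fun j : Fin p => ((j : ℕ) : ZMod p) := fun a b h => Fin.ext <| by
    simpa [ZMod.val_cast_of_lt a.2, ZMod.val_cast_of_lt b.2] using congrArg ZMod.val h
  have hbij := (Fintype.bijective_iff_injective_and_card _).mpr ⟨hinj, by simp⟩
  exact Fintype.sum_bijective _ hbij _ _ fun _ => rfl

theorem rot_mul_Ahat (c : ZMod p → F) : rot c * Ahat p F = (∑ i, c i) • Ahat p F := by
  have h : ∀ i, of F (Dg p) (r i) * Ahat p F = Ahat p F := fun i => by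
    simp only [Ahat_eq_rot, rot, one_smul, Finset.mul_sum, ← map_mul, r_mul_r]
    exact Fintype.sum_equiv (Equiv.addLeft i) _ _ fun _ => rfl
  simp only [rot, Finset.sum_mul, smul_mul_assoc, h, Finset.sum_smul]

theorem Ahat_mem_center : Ahat p F ∈ Subalgebra.center F (FG p F) :=
  mem_center_of_coeff (by simp [Ahat_eq_rot]) (by simp [Ahat_eq_rot])

theorem Ahat_mem_gammaA [CharP F p] : Ahat p F ∈ gammaA p F := by
  simpa [← Ahat_eq_rot] using rot_sub_sum_smul_one_mem_gammaA (F := F) (p := p) fun _ => 1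

@[simp] theorem coeff_Ahat_mul_bb_r (i : ZMod p) :
    (Ahat p F * of F (Dg p) (bb p)).coeff (r i) = 0 := by
  simp [of_apply, bb, r_mul_sr, Ahat_eq_rot]

@[simp] theorem coeff_Ahat_mul_bb_sr (i : ZMod p) :
    (Ahat p F * of F (Dg p) (bb p)).coeff (sr i) = 1 := by
  simp [of_apply, bb, sr_mul_sr, Ahat_eq_rot]

theorem oneFAb_subset_center : oneFAb p F ⊆ Subalgebra.center F (FG p F) := by
  rintro _ ⟨β, rfl⟩
  rw [algebraMap_mul_Ahat_mul_bb]
  refine add_mem (one_mem _) (Subalgebra.smul_mem _ (mem_center_of_coeff ?_ ?_) β) <;>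
    simp only [coeff_Ahat_mul_bb_r, coeff_Ahat_mul_bb_sr, implies_true]

theorem oneFAb_subset_oneGamma [CharP F p] : oneFAb p F ⊆ oneGamma p F := by
  rintro _ ⟨β, rfl⟩
  show _ - 1 ∈ gammaA p F
  -- `gammaA` is only a left ideal, so `Âb` is moved into it as `bÂ`.
  rw [add_sub_cancel_left, mul_assoc, (Subalgebra.mem_center_iff.mp Ahat_mem_center _).symm]
  exact Ideal.mul_mem_left _ _ (Ideal.mul_mem_left _ _ Ahat_mem_gammaA)

theorem rot_mul_one_add_smul {c : ZMod p → F} (hc : ∑ i, c i = 1) (β : F) :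
    rot c * (1 + β • (Ahat p F * of F (Dg p) (bb p))) =
      rot c + β • (Ahat p F * of F (Dg p) (bb p)) := by
  rw [mul_add, mul_one, mul_smul_comm, ← mul_assoc, rot_mul_Ahat, hc, one_smul]

theorem eq_of_rot_add_smul_eq {c c' : ZMod p → F} {β β' : F}
    (h : rot c + β • (Ahat p F * of F (Dg p) (bb p)) =
      rot c' + β' • (Ahat p F * of F (Dg p) (bb p))) :
    c = c' ∧ β = β' := by
  refine ⟨funext fun i => ?_, ?_⟩
  · simpa only [coeff_add, Finsupp.add_apply, coeff_smul_apply, coeff_rot_r,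
      coeff_Ahat_mul_bb_r, smul_zero, add_zero] using congrArg (fun z => z.coeff (r i)) h
  · simpa only [coeff_add, Finsupp.add_apply, coeff_smul_apply, coeff_rot_sr,
      coeff_Ahat_mul_bb_sr, smul_eq_mul, mul_one, zero_add] using
      congrArg (fun z => z.coeff (sr 0)) h

theorem sum_coeff_r_of_mem_Zcen [CharP F p] (hodd : Odd p) {x : FG p F} (hx : x ∈ Zcen p F) :
    ∑ i, x.coeff (r i) = 1 := by
  simpa [aug_eq_sum, coeff_sr_eq_of_mem_Zcen hodd hx] using aug_eq_one_of_mem_oneGamma hx.1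

theorem eq_rot_add_smul_of_mem_Zcen (hodd : Odd p) {x : FG p F} (hx : x ∈ Zcen p F) :
    x = rot (fun i => x.coeff (r i)) + x.coeff (sr 0) • (Ahat p F * of F (Dg p) (bb p)) := by
  ext (i | i) <;>
    simp only [coeff_add, Finsupp.add_apply, coeff_smul_apply, coeff_rot_r, coeff_rot_sr,
      coeff_Ahat_mul_bb_r, coeff_Ahat_mul_bb_sr, smul_eq_mul, mul_zero, add_zero, mul_one, zero_add]
  exact coeff_sr_eq_of_mem_Zcen hodd hx i

theorem existsUnique_SstarFA_mul_oneFAb [Fact p.Prime] [CharP F p] (hodd : Odd p) {x : FG p F}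
    (hx : x ∈ Zcen p F) : ∃! st : FG p F × FG p F,
      st.1 ∈ SstarFA p F ∧ st.2 ∈ oneFAb p F ∧ x = st.1 * st.2 := by
  have hc := sum_coeff_r_of_mem_Zcen hodd hx
  refine ⟨(rot fun i => x.coeff (r i),
    1 + algebraMap F _ (x.coeff (sr 0)) * Ahat p F * of F (Dg p) (bb p)),
    ⟨rot_mem_SstarFA hc (coeff_r_neg_of_mem_Zcen hx), ⟨_, rfl⟩, ?_⟩, ?_⟩
  · rw [algebraMap_mul_Ahat_mul_bb, rot_mul_one_add_smul hc]
    exact eq_rot_add_smul_of_mem_Zcen hodd hx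
  · rintro ⟨s, t⟩ ⟨hs, ⟨β, rfl⟩, hst⟩
    rw [algebraMap_mul_Ahat_mul_bb, ← rot_coeff_r_eq_self hs.1,
      rot_mul_one_add_smul (sum_coeff_r_of_mem_SstarFA hs)] at hst
    obtain ⟨hcs, hβ⟩ :=
      eq_of_rot_add_smul_eq ((eq_rot_add_smul_of_mem_Zcen hodd hx).symm.trans hst)
    rw [hcs, rot_coeff_r_eq_self hs.1, hβ]

theorem SstarFA_inter_oneFAb : SstarFA p F ∩ oneFAb p F = {1} := by
  refine Set.eq_singleton_iff_unique_mem.mpr ⟨⟨one_mem_SstarFA, 0, by simp⟩, ?_⟩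
  rintro _ ⟨hs, β, rfl⟩
  have hβ : β = 0 := by
    have h := coeff_sr_eq_zero_of_memFA hs.1 0
    rw [algebraMap_mul_Ahat_mul_bb, coeff_add, Finsupp.add_apply, coeff_smul_apply,
      coeff_Ahat_mul_bb_sr] at h
    simpa [MonoidAlgebra.one_def, Finsupp.single_apply, DihedralGroup.one_def, -r_zero] using h
  simp [hβ]

end DihedralGroupAlgebra

theorem stmt10_general (p : ℕ) (hp : p.Prime) (hodd : Odd p)
    (F : Type) [Field F] [CharP F p] :
    SstarFA p F ⊆ Zcen p F ∧
    oneFAb p F ⊆ Zcen p F ∧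
    (∀ s ∈ SstarFA p F, ∀ t ∈ oneFAb p F, s * t = t * s) ∧
    (∀ x ∈ Zcen p F, ∃! st : FG p F × FG p F,
      st.1 ∈ SstarFA p F ∧ st.2 ∈ oneFAb p F ∧ x = st.1 * st.2) ∧
    SstarFA p F ∩ oneFAb p F = {1} := by
  have : Fact p.Prime := ⟨hp⟩
  open DihedralGroupAlgebra in
  exact ⟨fun s hs =>
      mem_Zcen_of_mem_center (SstarFA_subset_oneGamma hs) (SstarFA_subset_center hs),
    fun t ht => mem_Zcen_of_mem_center (oneFAb_subset_oneGamma ht) (oneFAb_subset_center ht),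
    fun s _ t ht => Subalgebra.mem_center_iff.mp (oneFAb_subset_center ht) s,
    fun x hx => existsUnique_SstarFA_mul_oneFAb hodd hx, SstarFA_inter_oneFAb⟩

/-- `Z(1 + Γ(A))` is the internal direct product of `S_*(FA)` and
`1 + FÂb`: both are contained in the center, they commute elementwise, intersect
trivially, and every central element is uniquely a product of an element of `S_*(FA)`
with an element of `1 + FÂb`. -/
theorem stmt10 (p : ℕ) (hp : p.Prime) (hodd : Odd p)
    (F : Type) [Field F] [Fintype F] [CharP F p] :
    SstarFA p F ⊆ Zcen p F ∧
    oneFAb p F ⊆ Zcen p F ∧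
    (∀ s ∈ SstarFA p F, ∀ t ∈ oneFAb p F, s * t = t * s) ∧
    (∀ x ∈ Zcen p F, ∃! st : FG p F × FG p F,
      st.1 ∈ SstarFA p F ∧ st.2 ∈ oneFAb p F ∧ x = st.1 * st.2) ∧
    SstarFA p F ∩ oneFAb p F = {1} :=
  stmt10_general p hp hodd F
end
end

section
/- The unit group 𝒰(FD_{2p}) is isomorphic to the semidirect product (1 + Γ(A)) ⋊ (F^* × F^*), where F^* is the multiplicative group of F: the natural epimorphism 𝒰(FD_{2p}) → 𝒰(FC_2) ≅ F^* × F^* induced by the quotient D_{2p} → D_{2p}/A has kernel 1 + Γ(A) and splits. -/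
/-!
The ring map `F[D_{2p}] → F[C₂]` induced by the sign map `D_{2p} → C₂` has a right inverse,
induced by the section `C₂ → D_{2p}` that sends the generator to a reflection; on units it is
therefore a split epimorphism, and `𝒰(FD_{2p})` is the semidirect product of its kernel by
`𝒰(FC₂)`. For a surjection of groups `f : G → H` with a set-theoretic section `σ`, every `x` in
`k[G]` differs from its image under `σ ∘ f` by a left combination of the `g - 1`, `g ∈ ker f`, so the
kernel of `k[G] → k[H]` is the ideal generated by these; as `A` is the kernel of the sign map, the
units mapping to `1` form `1 + Γ(A)`. Finally, `2` is invertible in `F` because `p` is odd, so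
the two characters of `C₂` give `F[C₂] ≅ F × F`, whence `𝒰(FC₂) ≅ F^* × F^*`.
-/
noncomputable section
open MonoidAlgebra
/-- The sign homomorphism `D_{2p} → C₂`, trivial on rotations. -/
def sgn (p : ℕ) : Dg p →* Multiplicative (ZMod 2) where
  toFun g := match g with
    | DihedralGroup.r _ => 1
    | DihedralGroup.sr _ => Multiplicative.ofAdd 1
  map_one' := rfl
  map_mul' := by
    rintro (i | i) (j | j) <;>
      simp only [DihedralGroup.r_mul_r, DihedralGroup.r_mul_sr, DihedralGroup.sr_mul_r,
        DihedralGroup.sr_mul_sr] <;> decide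

/-- `1 + Γ(A)` as a subgroup of the unit group of `FD_{2p}`. -/
def oneGammaU (p : ℕ) (F : Type) [Field F] : Subgroup (FG p F)ˣ where
  carrier := {u | (u : FG p F) - 1 ∈ gammaA p F}
  one_mem' := by simp
  mul_mem' := by
    intro u v hu hv
    have h : ((↑(u * v) : FG p F)) - 1
        = (u : FG p F) * ((v : FG p F) - 1) + ((u : FG p F) - 1) := by
      push_cast
      noncomm_ring
    show ((↑(u * v) : FG p F)) - 1 ∈ gammaA p F
    rw [h]
    exact (gammaA p F).add_mem (Ideal.mul_mem_left _ _ hv) hu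
  inv_mem' := by
    intro u hu
    have h : ((↑u⁻¹ : FG p F)) - 1 = -((↑u⁻¹ : FG p F) * ((u : FG p F) - 1)) := by
      rw [mul_sub, Units.inv_mul, mul_one, neg_sub]
    show ((↑u⁻¹ : FG p F)) - 1 ∈ gammaA p F
    rw [h]
    exact (gammaA p F).neg_mem (Ideal.mul_mem_left _ _ hu)

theorem Units.mem_ker_map_iff {R S : Type*} [Ring R] [Ring S] (φ : R →+* S) (u : Rˣ) :
    u ∈ (Units.map φ.toMonoidHom).ker ↔ (u : R) - 1 ∈ RingHom.ker φ := by
  rw [MonoidHom.mem_ker, Units.ext_iff, RingHom.mem_ker, map_sub, map_one, sub_eq_zero]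
  rfl

theorem MonoidHom.exists_mulEquiv_semidirectProduct_ker {E G : Type*} [Group E] [Group G]
    (θ : E →* G) (s : G →* E) (hs : θ.comp s = MonoidHom.id G) :
    ∃ act : G →* MulAut θ.ker, Nonempty (E ≃* θ.ker ⋊[act] G) := by
  let S : GroupExtension θ.ker E G :=
    { inl := θ.ker.subtype
      rightHom := θ
      inl_injective := Subtype.coe_injective
      range_inl_eq_ker_rightHom := θ.ker.range_subtype
      rightHom_surjective := fun g => ⟨s g, DFunLike.congr_fun hs g⟩ }
  let σ : S.Splitting := ⟨s, fun g => DFunLike.congr_fun hs g⟩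
  exact ⟨σ.conjAct, ⟨σ.semidirectProductMulEquiv.symm⟩⟩

namespace MonoidAlgebra

theorem mapDomain_comp {k M N O : Type*} [Semiring k] (f : M → N) (g : N → O) (x : k[M]) :
    mapDomain (g ∘ f) x = mapDomain g (mapDomain f x) := by
  ext1
  simp [Finsupp.mapDomain_comp]

section Kernel

variable {k G H : Type*} [Ring k] [Group G] [Group H]

theorem sub_mapDomain_mem_span_ker (f : G →* H) {σ : H → G} (hσ : Function.RightInverse σ f)
    (x : k[G]) : x - mapDomain (σ ∘ f) x ∈ Ideal.span ((fun g => of k G g - 1) '' f.ker) := by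
  induction x using MonoidAlgebra.induction_linear with
  | zero => simp
  | add x y hx hy =>
    rw [mapDomain_add, add_sub_add_comm]
    exact add_mem hx hy
  | single g c =>
    have hker : (σ (f g))⁻¹ * g ∈ f.ker := by simp [MonoidHom.mem_ker, hσ (f g)]
    have hsingle : single g c - mapDomain (σ ∘ f) (single g c) =
        single (σ (f g)) c * (of k G ((σ (f g))⁻¹ * g) - 1) := by
      simp [mul_sub, single_mul_single]
    rw [hsingle]
    exact Ideal.mul_mem_left _ _ (Ideal.subset_span ⟨_, hker, rfl⟩)

theorem ker_mapDomainRingHom (f : G →* H) (hf : Function.Surjective f) :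
    RingHom.ker (mapDomainRingHom k f) = Ideal.span ((fun g => of k G g - 1) '' f.ker) := by
  refine le_antisymm (fun x hx => ?_) (Ideal.span_le.2 ?_)
  · have hx : mapDomain f x = 0 := hx
    simpa [mapDomain_comp, hx] using sub_mapDomain_mem_span_ker f (Function.rightInverse_surjInv hf) x
  · rintro _ ⟨g, hg, rfl⟩
    rw [SetLike.mem_coe, RingHom.mem_ker, map_sub, map_one, mapDomainRingHom_apply, of_apply,
      mapDomain_single, hg, ← one_def, sub_self]

end Kernel

theorem units_map_mapDomainRingHom_comp {k G H : Type*} [Semiring k] [Monoid G] [Monoid H]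
    {f : G →* H} {i : H →* G} (hfi : f.comp i = MonoidHom.id H) :
    (Units.map (mapDomainRingHom k f).toMonoidHom).comp
      (Units.map (mapDomainRingHom k i).toMonoidHom) = MonoidHom.id _ := by
  refine MonoidHom.ext fun u => Units.ext ?_
  change (mapDomainRingHom k f).comp (mapDomainRingHom k i) u = u
  rw [← mapDomainRingHom_comp, hfi, mapDomainRingHom_id, RingHom.id_apply]

end MonoidAlgebra

def zmodTwoPowHom {M : Type*} [Monoid M] (g : M) (hg : g ^ 2 = 1) :
    Multiplicative (ZMod 2) →* M where
  toFun x := g ^ (Multiplicative.toAdd x).val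
  map_one' := by simp
  map_mul' x y := by
    rw [toAdd_mul, ZMod.val_add, ← pow_add, ← pow_eq_pow_mod _ hg]

theorem zmodTwoPowHom_ofAdd_one {M : Type*} [Monoid M] (g : M) (hg : g ^ 2 = 1) :
    zmodTwoPowHom g hg (Multiplicative.ofAdd 1) = g :=
  pow_one g

theorem Multiplicative.zmod_two_eq_one_or_eq_ofAdd_one (x : Multiplicative (ZMod 2)) :
    x = 1 ∨ x = Multiplicative.ofAdd 1 := by
  revert x; decide

namespace MonoidAlgebra

variable (R : Type*) [CommRing R]

theorem eq_single_one_add_single_ofAdd_one (x : R[Multiplicative (ZMod 2)]) :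
    x = single 1 (x.coeff 1) + single (Multiplicative.ofAdd 1) (x.coeff (Multiplicative.ofAdd 1)) := by
  ext g
  rcases Multiplicative.zmod_two_eq_one_or_eq_ofAdd_one g with rfl | rfl <;> simp

def zmodTwoToProd : R[Multiplicative (ZMod 2)] →+* R × R :=
  (lift R R _ 1).toRingHom.prod (lift R R _ (zmodTwoPowHom (-1) neg_one_sq)).toRingHom

theorem zmodTwoToProd_apply (x : R[Multiplicative (ZMod 2)]) :
    zmodTwoToProd R x = (x.coeff 1 + x.coeff (Multiplicative.ofAdd 1),
      x.coeff 1 - x.coeff (Multiplicative.ofAdd 1)) := by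
  conv_lhs => rw [eq_single_one_add_single_ofAdd_one R x]
  simp [zmodTwoToProd, lift_single, zmodTwoPowHom_ofAdd_one, sub_eq_add_neg]

def zmodTwoRingEquiv [Invertible (2 : R)] : R[Multiplicative (ZMod 2)] ≃+* R × R where
  toFun := zmodTwoToProd R
  invFun uv := single 1 (⅟2 * (uv.1 + uv.2)) + single (Multiplicative.ofAdd 1) (⅟2 * (uv.1 - uv.2))
  left_inv x := by
    have half_add_self (a : R) : ⅟2 * (a + a) = a := by
      linear_combination a * invOf_two_add_invOf_two (R := R)
    ext g
    rcases Multiplicative.zmod_two_eq_one_or_eq_ofAdd_one g with rfl | rfl <;>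
      simp [zmodTwoToProd_apply, half_add_self]
  right_inv := by
    rintro ⟨u, v⟩
    have hu : ⅟2 * (u + v) + ⅟2 * (u - v) = u := by
      linear_combination u * invOf_two_add_invOf_two (R := R)
    have hv : ⅟2 * (u + v) - ⅟2 * (u - v) = v := by
      linear_combination v * invOf_two_add_invOf_two (R := R)
    ext <;> simp [zmodTwoToProd_apply, hu, hv]
  map_mul' := map_mul _
  map_add' := map_add _

def unitsZModTwoMulEquiv [Invertible (2 : R)] : (R[Multiplicative (ZMod 2)])ˣ ≃* Rˣ × Rˣ :=
  (Units.mapEquiv (zmodTwoRingEquiv R).toMulEquiv).trans MulEquiv.prodUnits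

end MonoidAlgebra

def sgnSection (p : ℕ) : Multiplicative (ZMod 2) →* Dg p :=
  zmodTwoPowHom (DihedralGroup.sr 0) (by rw [sq, DihedralGroup.sr_mul_self])

theorem sgn_comp_sgnSection (p : ℕ) : (sgn p).comp (sgnSection p) = MonoidHom.id _ := by
  refine MonoidHom.ext fun x => ?_
  rcases Multiplicative.zmod_two_eq_one_or_eq_ofAdd_one x with rfl | rfl
  · simp
  · rw [MonoidHom.comp_apply, sgnSection, zmodTwoPowHom_ofAdd_one]
    rfl

theorem sgn_surjective (p : ℕ) : Function.Surjective (sgn p) :=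
  fun x => ⟨sgnSection p x, DFunLike.congr_fun (sgn_comp_sgnSection p) x⟩

theorem Asub_eq_ker_sgn (p : ℕ) : Asub p = (sgn p).ker := by
  refine le_antisymm ((Subgroup.zpowers_le).2 rfl) ?_
  rintro (i | i) hi
  · refine ⟨(i.cast : ℤ), ?_⟩
    change DihedralGroup.r 1 ^ (i.cast : ℤ) = _
    rw [DihedralGroup.r_one_zpow, ZMod.intCast_zmod_cast]
  · exact absurd hi (by decide : Multiplicative.ofAdd (1 : ZMod 2) ≠ 1)

theorem gammaA_eq_ker (p : ℕ) (F : Type) [Field F] :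
    gammaA p F = RingHom.ker (mapDomainRingHom F (sgn p)) := by
  rw [gammaA, MonoidAlgebra.ker_mapDomainRingHom _ (sgn_surjective p), Asub_eq_ker_sgn]

theorem oneGammaU_eq_ker (p : ℕ) (F : Type) [Field F] :
    oneGammaU p F = (Units.map (mapDomainRingHom F (sgn p)).toMonoidHom).ker := by
  ext u
  rw [Units.mem_ker_map_iff, ← gammaA_eq_ker]
  rfl

theorem stmt15_general (p : ℕ) (hodd : Odd p)
    (F : Type) [Field F] [CharP F p] :
    ∀ θ : (FG p F)ˣ →* (MonoidAlgebra F (Multiplicative (ZMod 2)))ˣ,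
      θ = Units.map (MonoidAlgebra.mapDomainRingHom F (sgn p)).toMonoidHom →
      -- the natural map is an epimorphism with kernel `1 + Γ(A)` …
      Function.Surjective θ ∧
      θ.ker = oneGammaU p F ∧
      -- … which splits …
      (∃ s : (MonoidAlgebra F (Multiplicative (ZMod 2)))ˣ →* (FG p F)ˣ,
        θ.comp s = MonoidHom.id _) ∧
      -- … and `𝒰(FC₂) ≅ F* × F*`
      Nonempty ((MonoidAlgebra F (Multiplicative (ZMod 2)))ˣ ≃* Fˣ × Fˣ) ∧
      -- hence `𝒰(FD_{2p}) ≅ (1 + Γ(A)) ⋊ (F* × F*)`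
      (∃ act : Fˣ × Fˣ →* MulAut (oneGammaU p F),
        Nonempty ((FG p F)ˣ ≃* SemidirectProduct (oneGammaU p F) (Fˣ × Fˣ) act)) := by
  rintro _ rfl
  let : Invertible (2 : F) := invertibleOfCoprime (Nat.coprime_two_left.2 hodd)
  set θ := Units.map (mapDomainRingHom F (sgn p)).toMonoidHom
  set s := Units.map (mapDomainRingHom F (sgnSection p)).toMonoidHom
  have hsplit : θ.comp s = MonoidHom.id _ :=
    MonoidAlgebra.units_map_mapDomainRingHom_comp (sgn_comp_sgnSection p)
  have hθs : ∀ v, θ (s v) = v := DFunLike.congr_fun hsplit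
  let e := MonoidAlgebra.unitsZModTwoMulEquiv F
  have hker : oneGammaU p F = θ.ker := oneGammaU_eq_ker p F
  refine ⟨fun v => ⟨s v, hθs v⟩, hker.symm, ⟨s, hsplit⟩, ⟨e⟩, ?_⟩
  rw [hker, ← MonoidHom.ker_mulEquiv_comp θ e]
  refine (e.toMonoidHom.comp θ).exists_mulEquiv_semidirectProduct_ker
    (s.comp e.symm.toMonoidHom) (MonoidHom.ext fun v => ?_)
  change e (θ (s (e.symm v))) = v
  rw [hθs, MulEquiv.apply_symm_apply]

/-- `𝒰(FD_{2p}) ≅ (1 + Γ(A)) ⋊ (F* × F*)`: the natural epimorphism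
`𝒰(FD_{2p}) → 𝒰(FC₂)` induced by `D_{2p} → D_{2p}/A ≅ C₂` is surjective, has kernel
`1 + Γ(A)`, and splits; moreover `𝒰(FC₂) ≅ F* × F*`, and consequently `𝒰(FD_{2p})` is
isomorphic to a semidirect product `(1 + Γ(A)) ⋊ (F* × F*)`. -/
theorem stmt15 (p : ℕ) (hp : p.Prime) (hodd : Odd p)
    (F : Type) [Field F] [Fintype F] [CharP F p] :
    ∀ θ : (FG p F)ˣ →* (MonoidAlgebra F (Multiplicative (ZMod 2)))ˣ,
      θ = Units.map (MonoidAlgebra.mapDomainRingHom F (sgn p)).toMonoidHom →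
      -- the natural map is an epimorphism with kernel `1 + Γ(A)` …
      Function.Surjective θ ∧
      θ.ker = oneGammaU p F ∧
      -- … which splits …
      (∃ s : (MonoidAlgebra F (Multiplicative (ZMod 2)))ˣ →* (FG p F)ˣ,
        θ.comp s = MonoidHom.id _) ∧
      -- … and `𝒰(FC₂) ≅ F* × F*`
      Nonempty ((MonoidAlgebra F (Multiplicative (ZMod 2)))ˣ ≃* Fˣ × Fˣ) ∧
      -- hence `𝒰(FD_{2p}) ≅ (1 + Γ(A)) ⋊ (F* × F*)`
      (∃ act : Fˣ × Fˣ →* MulAut (oneGammaU p F),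
        Nonempty ((FG p F)ˣ ≃* SemidirectProduct (oneGammaU p F) (Fˣ × Fˣ) act)) :=
  stmt15_general p hodd F
end
end
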